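/- arXiv:0902.4528 — 8 statements merged into one kernel-verified Lean document; each statement's English description precedes it below -/
import Mathlib

section
/- Let K be a field with at least n elements, L a field extension of K, and (A_i), (B_i) two families of n×n matrices over K indexed by the same set I. If there exists P in GL_n(L) with P A_i P^{-1} = B_i for all i, then there exists Q in GL_n(K) with Q A_i Q^{-1} = B_i for all i. -/
/-! Expand `P = ∑ⱼ bⱼ • Pⱼ` along a `K`-basis `(bⱼ)` of `L`, with `Pⱼ ∈ Mₙ(K)`. Applying the
coordinate functionals entrywise to `P Aᵢ = Bᵢ P` gives `Pⱼ Aᵢ = Bᵢ Pⱼ`, so every `K`-linear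
combination of the `Pⱼ` intertwines the two families. The polynomial `det (∑ⱼ xⱼ Pⱼ)` is
homogeneous of degree `n` and does not vanish at `x = b`, so it is nonzero; since `#K ≥ n` it
has a nonvanishing `K`-point `a`, and `Q = ∑ⱼ aⱼ Pⱼ` is invertible. -/

open MvPolynomial Cardinal

theorem Matrix.det_isHomogeneous {σ R m : Type*} [CommRing R] [Fintype m] [DecidableEq m]
    (M : Matrix m m (MvPolynomial σ R)) (hM : ∀ i j, (M i j).IsHomogeneous 1) :
    M.det.IsHomogeneous (Fintype.card m) := by
  rw [Matrix.det_apply]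
  refine IsHomogeneous.sum _ _ _ fun p _ => ?_
  have hprod : (∏ i, M (p i) i).IsHomogeneous (Fintype.card m) := by
    simpa using IsHomogeneous.prod Finset.univ _ (fun _ => 1) fun i _ => hM (p i) i
  rw [Units.smul_def]
  exact (mem_homogeneousSubmodule _ _).1 (zsmul_mem ((mem_homogeneousSubmodule _ _).2 hprod) _)

section

variable {K : Type*} {l m n : Type*} [Fintype m]

theorem Matrix.map_mul_map_algebraMap [CommSemiring K] {L : Type*} [Semiring L] [Algebra K L]
    (f : L →ₗ[K] K) (M : Matrix l m L) (N : Matrix m n K) :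
    (M * N.map (algebraMap K L)).map f = M.map f * N := by
  ext i k
  simp [Matrix.mul_apply, ← Algebra.commutes, ← Algebra.smul_def, mul_comm]

theorem Matrix.map_map_algebraMap_mul [CommSemiring K] {L : Type*} [Semiring L] [Algebra K L]
    (f : L →ₗ[K] K) (N : Matrix l m K) (M : Matrix m n L) :
    (N.map (algebraMap K L) * M).map f = N * M.map f := by
  ext i k
  simp [Matrix.mul_apply, ← Algebra.smul_def]

theorem Module.Basis.exists_finset_sum_smul_map_coord [CommSemiring K] {L : Type*}
    [CommSemiring L] [Algebra K L] {ι : Type*} [Fintype n] (𝔅 : Module.Basis ι K L)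
    (P : Matrix m n L) :
    ∃ s : Finset ι, ∑ b ∈ s, 𝔅 b • (P.map (𝔅.coord b)).map (algebraMap K L) = P := by
  classical
  refine ⟨Finset.univ.biUnion fun ij : m × n => (𝔅.repr (P ij.1 ij.2)).support, ?_⟩
  ext i j
  have hsub : (𝔅.repr (P i j)).support ⊆ _ :=
    Finset.subset_biUnion_of_mem (fun ij : m × n => (𝔅.repr (P ij.1 ij.2)).support)
      (Finset.mem_univ (i, j))
  simp only [Matrix.sum_apply, Matrix.smul_apply, Matrix.map_apply, coord_apply, smul_eq_mul,
    mul_comm (𝔅 _), ← Algebra.smul_def]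
  rw [← Finsupp.sum_of_support_subset _ hsub (fun b r => r • 𝔅 b) fun _ _ => zero_smul K _,
    ← Finsupp.linearCombination_apply, 𝔅.linearCombination_repr]

end

section

variable {K ι m : Type*} [CommRing K] (s : Finset ι) (M : ι → Matrix m m K)

noncomputable def genericCombination : Matrix m m (MvPolynomial ι K) :=
  ∑ b ∈ s, (X b : MvPolynomial ι K) • (M b).map C

theorem genericCombination_apply (i j : m) :
    genericCombination s M i j = ∑ b ∈ s, X b * C (M b i j) := by
  simp [genericCombination, Matrix.sum_apply]

theorem aeval_det_genericCombination [Fintype m] [DecidableEq m] {S : Type*} [CommRing S]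
    [Algebra K S] (g : ι → S) :
    aeval g (genericCombination s M).det = (∑ b ∈ s, g b • (M b).map (algebraMap K S)).det := by
  rw [AlgHom.map_det]
  congr 1
  ext i j
  simp [genericCombination_apply, Matrix.sum_apply]

theorem exists_det_sum_smul_ne_zero [IsDomain K] [Fintype m] [DecidableEq m] {L : Type*}
    [CommRing L] [Algebra K L] (hK : (Fintype.card m : Cardinal) ≤ #K) (c : ι → L)
    (hc : (∑ b ∈ s, c b • (M b).map (algebraMap K L)).det ≠ 0) :
    ∃ a : ι → K, (∑ b ∈ s, a b • M b).det ≠ 0 := by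
  have hhom : (genericCombination s M).det.IsHomogeneous (Fintype.card m) := by
    refine Matrix.det_isHomogeneous _ fun i j => ?_
    simp only [genericCombination_apply, mul_comm (X _)]
    exact IsHomogeneous.sum _ _ _ fun b _ => isHomogeneous_C_mul_X _ b
  have hne : (genericCombination s M).det ≠ 0 := by
    intro h0
    rw [← aeval_det_genericCombination, h0, map_zero] at hc
    exact hc rfl
  by_contra! hzero
  refine hne (hhom.eq_zero_of_forall_eval_eq_zero_of_le_card (fun a => ?_) hK)
  simpa [← coe_aeval_eq_eval, aeval_det_genericCombination] using hzero a

end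

theorem Matrix.coe_units_mul_mul_inv_eq_iff {n R : Type*} [Fintype n] [DecidableEq n]
    [CommRing R] (Q : (Matrix n n R)ˣ) (A B : Matrix n n R) :
    (Q : Matrix n n R) * A * (Q : Matrix n n R)⁻¹ = B ↔ Q * A = B * Q := by
  rw [← Matrix.coe_units_inv, Units.mul_inv_eq_iff_eq_mul]

/-- If `K` has at least `n` elements and two families of `n × n` matrices over `K`
are simultaneously similar over a field extension `L`, then they are simultaneously
similar over `K`. -/
theorem stmt_0 {K L : Type*} [Field K] [Field L] [Algebra K L] {n : ℕ}
    (hK : (n : Cardinal) ≤ Cardinal.mk K) {I : Type*}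
    (A B : I → Matrix (Fin n) (Fin n) K)
    (P : (Matrix (Fin n) (Fin n) L)ˣ)
    (h : ∀ i, (P : Matrix (Fin n) (Fin n) L) * (A i).map (algebraMap K L) * (P⁻¹ : Matrix (Fin n) (Fin n) L) =
      (B i).map (algebraMap K L)) :
    ∃ Q : (Matrix (Fin n) (Fin n) K)ˣ,
      ∀ i, (Q : Matrix (Fin n) (Fin n) K) * A i * (Q⁻¹ : Matrix (Fin n) (Fin n) K) = B i := by
  let 𝔅 := Module.Basis.ofVectorSpace K L
  let M := fun b => (P : Matrix (Fin n) (Fin n) L).map (𝔅.coord b)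
  have hM : ∀ b i, M b * A i = B i * M b := fun b i => by
    rw [← Matrix.map_mul_map_algebraMap, (Matrix.coe_units_mul_mul_inv_eq_iff _ _ _).mp (h i),
      Matrix.map_map_algebraMap_mul]
  obtain ⟨s, hs⟩ := 𝔅.exists_finset_sum_smul_map_coord (P : Matrix (Fin n) (Fin n) L)
  have hdetP : (P : Matrix (Fin n) (Fin n) L).det ≠ 0 :=
    ((Matrix.isUnit_iff_isUnit_det _).mp P.isUnit).ne_zero
  obtain ⟨a, ha⟩ := exists_det_sum_smul_ne_zero s M (by simpa using hK) 𝔅 (hs ▸ hdetP)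
  have hQ : IsUnit (∑ b ∈ s, a b • M b) :=
    (Matrix.isUnit_iff_isUnit_det _).mpr (isUnit_iff_ne_zero.mpr ha)
  refine ⟨hQ.unit, fun i => (Matrix.coe_units_mul_mul_inv_eq_iff _ _ _).mpr ?_⟩
  simp only [IsUnit.unit_spec, Finset.sum_mul, Finset.mul_sum, Matrix.smul_mul, Matrix.mul_smul,
    hM]
end

section
/- Let K ⊆ L be a field extension and (A_i), (B_i) two families of n×n matrices over K indexed by the same set I. Then (A_i) and (B_i) are simultaneously similar over K (i.e. there is P ∈ GL_n(K) with P A_i P^{-1} = B_i for all i) if and only if they are simultaneously similar over L. -/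
/-!
Similarity of `(Aᵢ)` and `(Bᵢ)` over `K` amounts to an isomorphism between the modules `Kⁿ_A` and
`Kⁿ_B` over the free algebra `K⟨I⟩`, whose `i`-th generator acts by `Aᵢ` resp. `Bᵢ`. Similarity over
`L` descends to `K` as follows.

If `K` is infinite, write a conjugating matrix as `P = ∑ₜ bₜ Xₜ` along a `K`-basis `(bₜ)` of `L`;
each `Xₜ` intertwines `A` and `B`, and `det (∑ₜ xₜ Xₜ)` is a polynomial over `K` which does not
vanish at `x = b`, hence has a non-root in `K`.

If `K` is finite, a finitely generated `K`-subalgebra of `L` already contains the entries of `P`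
and `P⁻¹`; its residue fields are finite extensions `F` of `K` (Zariski's lemma), over which `A` and
`B` are similar. As modules over the free algebra, `Fⁿ ≅ (Kⁿ)ᵈ` with `d = [F : K]`, so
`(Kⁿ_A)ᵈ ≅ (Kⁿ_B)ᵈ`. Finite modules `M`, `N` with `|Hom(Z, M)| = |Hom(Z, N)|` for every finite
`Z` are isomorphic (Lovász): counting homomorphisms by their kernels shows inductively that `M`
and `N` receive equally many injections from every `Z`, and `M` embeds into itself.
-/

open Matrix

section FreeAlgebraModule

variable {K : Type*} [CommSemiring K] {I : Type*}
  {M N : Type*} [AddCommMonoid M] [Module K M] [Module (FreeAlgebra K I) M]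
  [IsScalarTower K (FreeAlgebra K I) M] [AddCommMonoid N] [Module K N]
  [Module (FreeAlgebra K I) N] [IsScalarTower K (FreeAlgebra K I) N]

lemma FreeAlgebra.map_smul_of_map_ι_smul (f : M →ₗ[K] N)
    (hf : ∀ (i : I) x, f (FreeAlgebra.ι K i • x) = FreeAlgebra.ι K i • f x)
    (r : FreeAlgebra K I) (x : M) : f (r • x) = r • f x := by
  induction r using FreeAlgebra.induction generalizing x with
  | grade0 k => simp only [algebraMap_smul, map_smul]
  | grade1 i => exact hf i x
  | mul a b ha hb => rw [mul_smul, mul_smul, ha, hb]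
  | add a b ha hb => rw [add_smul, add_smul, map_add, ha, hb]

def FreeAlgebra.linearEquivOfMapιSmul (e : M ≃ₗ[K] N)
    (he : ∀ (i : I) x, e (FreeAlgebra.ι K i • x) = FreeAlgebra.ι K i • e x) :
    M ≃ₗ[FreeAlgebra K I] N where
  __ := e
  map_smul' := FreeAlgebra.map_smul_of_map_ι_smul e.toLinearMap he

end FreeAlgebraModule

section FamilyModule

variable {K : Type*} [CommSemiring K] {I : Type*} {M : Type*} [AddCommMonoid M] [Module K M]

def FamilyModule (_T : I → Module.End K M) : Type _ := M

namespace FamilyModule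

variable (T : I → Module.End K M)

instance : AddCommMonoid (FamilyModule T) := inferInstanceAs (AddCommMonoid M)

instance {M : Type*} [AddCommGroup M] [Module K M] (T : I → Module.End K M) :
    AddCommGroup (FamilyModule T) := inferInstanceAs (AddCommGroup M)

instance : Module K (FamilyModule T) := inferInstanceAs (Module K M)

instance : Module (FreeAlgebra K I) (FamilyModule T) :=
  Module.compHom M (FreeAlgebra.lift K T).toRingHom

instance [Finite M] : Finite (FamilyModule T) := inferInstanceAs (Finite M)

def of : M ≃ₗ[K] FamilyModule T := LinearEquiv.refl K M

variable {T}

lemma smul_of (r : FreeAlgebra K I) (x : M) :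
    r • of T x = of T (FreeAlgebra.lift K T r x) := rfl

@[simp]
lemma ι_smul_of (i : I) (x : M) : FreeAlgebra.ι K i • of T x = of T (T i x) := by
  rw [smul_of, FreeAlgebra.lift_ι_apply]

instance : IsScalarTower K (FreeAlgebra K I) (FamilyModule T) :=
  ⟨fun k r x => by
    obtain ⟨x, rfl⟩ := (of T).surjective x
    rw [smul_of, smul_of, map_smul, LinearMap.smul_apply, map_smul]⟩

variable {N : Type*} [AddCommMonoid N] [Module K N] {T' : I → Module.End K N}

lemma nonempty_linearEquiv_iff :
    Nonempty (FamilyModule T ≃ₗ[FreeAlgebra K I] FamilyModule T') ↔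
      ∃ e : M ≃ₗ[K] N, ∀ i x, e (T i x) = T' i (e x) := by
  constructor
  · rintro ⟨e⟩
    refine ⟨of T ≪≫ₗ e.restrictScalars K ≪≫ₗ (of T').symm, fun i x => ?_⟩
    obtain ⟨y, hy⟩ := (of T').surjective (e (of T x))
    have := e.map_smul (FreeAlgebra.ι K i) (of T x)
    rw [ι_smul_of, ← hy, ι_smul_of] at this
    simp [this, ← hy]
  · rintro ⟨e, he⟩
    refine ⟨FreeAlgebra.linearEquivOfMapιSmul ((of T).symm ≪≫ₗ e ≪≫ₗ of T') fun i x => ?_⟩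
    obtain ⟨x, rfl⟩ := (of T).surjective x
    simp [he]

end FamilyModule

end FamilyModule

section Counting

universe v

variable {R : Type*} [Ring R]

lemma Submodule.card_quotient_lt {Z : Type*} [AddCommGroup Z] [Module R Z] [Finite Z]
    {W : Submodule R Z} (hW : W ≠ ⊥) : Nat.card (Z ⧸ W) < Nat.card Z := by
  refine (Nat.card_le_card_of_surjective _ W.mkQ_surjective).lt_of_ne fun h => hW ?_
  have := ((Nat.bijective_iff_surjective_and_card _).mpr ⟨W.mkQ_surjective, h.symm⟩).injective
  rwa [← LinearMap.ker_eq_bot, Submodule.ker_mkQ] at this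

def Submodule.kerEqEquiv {Z M : Type*} [AddCommGroup Z] [Module R Z] [AddCommGroup M]
    [Module R M] (W : Submodule R Z) :
    {f : Z →ₗ[R] M // LinearMap.ker f = W} ≃ {g : Z ⧸ W →ₗ[R] M // LinearMap.ker g = ⊥} where
  toFun f := ⟨W.liftQ f.1 f.2.ge, W.ker_liftQ_eq_bot' f.1 f.2.symm⟩
  invFun g := ⟨g.1 ∘ₗ W.mkQ, by rw [LinearMap.ker_comp, g.2, Submodule.comap_bot, ker_mkQ]⟩
  left_inv f := Subtype.ext (W.liftQ_mkQ _ _)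
  right_inv g := Subtype.ext (W.linearMap_qext (W.liftQ_mkQ _ _))

variable {Z M N : Type v} [AddCommGroup Z] [Module R Z] [AddCommGroup M] [Module R M]
  [AddCommGroup N] [Module R N]

lemma card_linearMap_eq_sum [Finite Z] [Finite M] [Fintype (Submodule R Z)] :
    Nat.card (Z →ₗ[R] M) =
      ∑ W : Submodule R Z, Nat.card {g : Z ⧸ W →ₗ[R] M // LinearMap.ker g = ⊥} := by
  have : Finite (Z →ₗ[R] M) := Finite.of_injective _ DFunLike.coe_injective
  rw [← Nat.card_congr (Equiv.sigmaFiberEquiv fun f : Z →ₗ[R] M => LinearMap.ker f),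
    Nat.card_sigma]
  exact Finset.sum_congr rfl fun W _ => Nat.card_congr W.kerEqEquiv

lemma card_ker_eq_bot_eq_of_card_linearMap_eq [Finite M] [Finite N]
    (H : ∀ (Z : Type v) [AddCommGroup Z] [Module R Z] [Finite Z],
      Nat.card (Z →ₗ[R] M) = Nat.card (Z →ₗ[R] N))
    (Z : Type v) [AddCommGroup Z] [Module R Z] [Finite Z] :
    Nat.card {f : Z →ₗ[R] M // LinearMap.ker f = ⊥} =
      Nat.card {f : Z →ₗ[R] N // LinearMap.ker f = ⊥} := by
  induction h : Nat.card Z using Nat.strong_induction_on generalizing Z with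
  | _ c ih =>
  classical
  have : Fintype (Submodule R Z) := Fintype.ofFinite _
  have hM := card_linearMap_eq_sum (R := R) (Z := Z) (M := M)
  have hN := card_linearMap_eq_sum (R := R) (Z := Z) (M := N)
  rw [← Finset.add_sum_erase _ _ (Finset.mem_univ ⊥), ← Nat.card_congr (Submodule.kerEqEquiv ⊥)]
    at hM hN
  have hquot : ∑ W ∈ Finset.univ.erase (⊥ : Submodule R Z),
      Nat.card {g : Z ⧸ W →ₗ[R] M // LinearMap.ker g = ⊥} =
      ∑ W ∈ Finset.univ.erase ⊥, Nat.card {g : Z ⧸ W →ₗ[R] N // LinearMap.ker g = ⊥} :=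
    Finset.sum_congr rfl fun W hW => by
      have : Finite (Z ⧸ W) := Finite.of_surjective _ W.mkQ_surjective
      exact ih _ (h ▸ Submodule.card_quotient_lt (Finset.ne_of_mem_erase hW)) (Z ⧸ W) rfl
  have := H Z
  omega

lemma exists_injective_of_card_linearMap_eq [Finite M] [Finite N]
    (H : ∀ (Z : Type v) [AddCommGroup Z] [Module R Z] [Finite Z],
      Nat.card (Z →ₗ[R] M) = Nat.card (Z →ₗ[R] N)) :
    ∃ f : M →ₗ[R] N, Function.Injective f := by
  have : Finite (M →ₗ[R] N) := Finite.of_injective _ DFunLike.coe_injective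
  have : Finite (M →ₗ[R] M) := Finite.of_injective _ DFunLike.coe_injective
  have : Nonempty {f : M →ₗ[R] M // LinearMap.ker f = ⊥} := ⟨⟨.id, LinearMap.ker_id⟩⟩
  have hpos : 0 < Nat.card {f : M →ₗ[R] N // LinearMap.ker f = ⊥} := by
    rw [← card_ker_eq_bot_eq_of_card_linearMap_eq H]
    exact Nat.card_pos
  obtain ⟨⟨f, hf⟩⟩ := (Nat.card_pos_iff.mp hpos).1
  exact ⟨f, LinearMap.ker_eq_bot.mp hf⟩

lemma nonempty_linearEquiv_of_card_linearMap_eq [Finite M] [Finite N]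
    (H : ∀ (Z : Type v) [AddCommGroup Z] [Module R Z] [Finite Z],
      Nat.card (Z →ₗ[R] M) = Nat.card (Z →ₗ[R] N)) :
    Nonempty (M ≃ₗ[R] N) := by
  obtain ⟨f, hf⟩ := exists_injective_of_card_linearMap_eq H
  obtain ⟨g, hg⟩ := exists_injective_of_card_linearMap_eq fun Z _ _ _ => (H Z).symm
  exact ⟨.ofBijective f ((Nat.bijective_iff_injective_and_card f).mpr
    ⟨hf, (Nat.card_le_card_of_injective f hf).antisymm (Nat.card_le_card_of_injective g hg)⟩)⟩

lemma card_linearMap_pi (κ : Type*) [Finite κ] :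
    Nat.card (Z →ₗ[R] (κ → M)) = Nat.card (Z →ₗ[R] M) ^ Nat.card κ := by
  rw [← Nat.card_fun, Nat.card_congr (LinearEquiv.linearMapPi ℕ).toEquiv]

lemma nonempty_linearEquiv_of_pi {κ : Type*} [Finite κ] [Nonempty κ] [Finite M] [Finite N]
    (e : (κ → M) ≃ₗ[R] (κ → N)) : Nonempty (M ≃ₗ[R] N) := by
  refine nonempty_linearEquiv_of_card_linearMap_eq fun Z _ _ _ => ?_
  have : Nat.card (Z →ₗ[R] (κ → M)) = Nat.card (Z →ₗ[R] (κ → N)) :=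
    Nat.card_congr (LinearEquiv.arrowCongrAddEquiv (LinearEquiv.refl R Z) e).toEquiv
  rw [card_linearMap_pi, card_linearMap_pi] at this
  exact Nat.pow_left_injective Nat.card_pos.ne' this

end Counting

section Coordinates

variable {K L : Type*} [CommRing K] [CommRing L] [Algebra K L] {m n p κ : Type*} [Fintype n]

lemma Matrix.map_linearMap_mul_map_algebraMap (f : L →ₗ[K] K) (P : Matrix m n L)
    (A : Matrix n p K) : (P * A.map (algebraMap K L)).map f = P.map f * A := by
  ext j k
  simp only [map_apply, mul_apply, ← Algebra.commutes, ← Algebra.smul_def, map_sum, map_smul,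
    smul_eq_mul]
  exact Finset.sum_congr rfl fun _ _ => mul_comm _ _

lemma Matrix.map_linearMap_map_algebraMap_mul (f : L →ₗ[K] K) (A : Matrix m n K)
    (P : Matrix n p L) : (A.map (algebraMap K L) * P).map f = A * P.map f := by
  ext j k
  simp [mul_apply, ← Algebra.smul_def]

lemma Module.Basis.exists_finset_eq_sum_smul_map_coord [Fintype m] (b : Module.Basis κ K L)
    (P : Matrix m n L) :
    ∃ T : Finset κ, P = ∑ t ∈ T, b t • (P.map (b.coord t)).map (algebraMap K L) := by
  classical
  let T := Finset.univ.biUnion fun q : m × n => (b.repr (P q.1 q.2)).support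
  refine ⟨T, Matrix.ext fun j k => ?_⟩
  calc P j k = (b.repr (P j k)).sum fun t c => c • b t := (b.linearCombination_repr _).symm
    _ = ∑ t ∈ T, b.repr (P j k) t • b t :=
      Finsupp.sum_of_support_subset _ (Finset.subset_biUnion_of_mem
        (fun q : m × n => (b.repr (P q.1 q.2)).support) (Finset.mem_univ (j, k)))
        (fun t c => c • b t) fun _ _ => zero_smul K _
    _ = _ := by simp [Matrix.sum_apply, Algebra.smul_def, mul_comm]

noncomputable def Module.Basis.transposeEquivFun [Finite κ] (b : Module.Basis κ K L)
    (ι : Type*) : (ι → L) ≃ₗ[K] (κ → ι → K) where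
  toFun v t j := b.repr (v j) t
  invFun w j := b.equivFun.symm fun t => w t j
  map_add' _ _ := by ext; simp
  map_smul' _ _ := by ext; simp
  left_inv v := funext fun j => b.equivFun.symm_apply_apply (v j)
  right_inv w := funext fun t => funext fun j =>
    congrFun (b.equivFun.apply_symm_apply fun t => w t j) t

variable {ι : Type*} [Fintype ι] [DecidableEq ι]

lemma MvPolynomial.aeval_det_sum_X_smul (s : Finset κ) (M : κ → Matrix ι ι K) (c : κ → L) :
    aeval c (∑ t ∈ s, (X t : MvPolynomial κ K) • (M t).map C).det =
      (∑ t ∈ s, c t • (M t).map (algebraMap K L)).det := by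
  rw [AlgHom.map_det]
  congr 1
  ext j k
  simp [Matrix.sum_apply]

end Coordinates

lemma Matrix.exists_isUnit_det_sum_smul {K L ι κ : Type*} [Field K] [Infinite K] [CommRing L]
    [Nontrivial L] [Algebra K L] [Fintype ι] [DecidableEq ι] (s : Finset κ)
    (M : κ → Matrix ι ι K) (c : κ → L)
    (hc : IsUnit (∑ t ∈ s, c t • (M t).map (algebraMap K L)).det) :
    ∃ a : κ → K, IsUnit (∑ t ∈ s, a t • M t).det := by
  let q : MvPolynomial κ K :=
    (∑ t ∈ s, (MvPolynomial.X t : MvPolynomial κ K) • (M t).map MvPolynomial.C).det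
  have hq : q ≠ 0 := fun hq => hc.ne_zero (by
    rw [← MvPolynomial.aeval_det_sum_X_smul, ← map_zero (MvPolynomial.aeval (R := K) c)]
    exact congrArg _ hq)
  obtain ⟨a, ha⟩ : ∃ a, MvPolynomial.eval a q ≠ 0 := by
    by_contra! h
    exact hq (MvPolynomial.funext fun a => by simp [h a])
  refine ⟨a, isUnit_iff_ne_zero.mpr ?_⟩
  simpa [q, ← MvPolynomial.coe_aeval_eq_eval, MvPolynomial.aeval_det_sum_X_smul] using ha

section SimilarOver

variable {K : Type*} [CommRing K] {ι : Type*} [Fintype ι] [DecidableEq ι] {I : Type*}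

def SimilarOver (C : Type*) [Semiring C] [Algebra K C] (A B : I → Matrix ι ι K) : Prop :=
  ∃ P : (Matrix ι ι C)ˣ, ∀ i,
    (P : Matrix ι ι C) * (A i).map (algebraMap K C) = (B i).map (algebraMap K C) * P

variable {A B : I → Matrix ι ι K}

lemma similarOver_iff_exists_conj {C : Type*} [CommRing C] [Algebra K C] :
    SimilarOver C A B ↔ ∃ P : (Matrix ι ι C)ˣ, ∀ i,
      (P : Matrix ι ι C) * (A i).map (algebraMap K C) * (P : Matrix ι ι C)⁻¹ =
        (B i).map (algebraMap K C) := by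
  simp only [SimilarOver, ← coe_units_inv, Units.mul_inv_eq_iff_eq_mul]

lemma similarOver_self_iff_exists_conj :
    SimilarOver K A B ↔ ∃ P : (Matrix ι ι K)ˣ, ∀ i,
      (P : Matrix ι ι K) * A i * (P : Matrix ι ι K)⁻¹ = B i := by
  simpa using similarOver_iff_exists_conj (C := K) (A := A) (B := B)

lemma SimilarOver.map {C D : Type*} [Semiring C] [Algebra K C] [Semiring D] [Algebra K D]
    (h : SimilarOver C A B) (f : C →ₐ[K] D) : SimilarOver D A B := by
  obtain ⟨P, hP⟩ := h
  refine ⟨Units.map f.mapMatrix.toMonoidHom P, fun i => ?_⟩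
  have hf : ⇑f ∘ ⇑(algebraMap K C) = algebraMap K D := funext f.commutes
  simpa [hf] using congrArg f.mapMatrix (hP i)

variable (A) in
abbrev MatrixModule (C : Type*) [CommRing C] [Algebra K C] :=
  FamilyModule fun i => ((A i).map (algebraMap K C)).mulVecLin.restrictScalars K

lemma SimilarOver.nonempty_linearEquiv {C : Type*} [CommRing C] [Algebra K C]
    (h : SimilarOver C A B) :
    Nonempty (MatrixModule A C ≃ₗ[FreeAlgebra K I] MatrixModule B C) := by
  obtain ⟨P, hP⟩ := h
  refine FamilyModule.nonempty_linearEquiv_iff.mpr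
    ⟨.ofLinearMap ((P : Matrix ι ι C).mulVecLin.restrictScalars K)
      ((P⁻¹ : (Matrix ι ι C)ˣ).1.mulVecLin.restrictScalars K)
      (LinearMap.ext fun v => by simp [mulVec_mulVec])
      (LinearMap.ext fun v => by simp [mulVec_mulVec]), fun i v => ?_⟩
  simp [mulVec_mulVec, hP i]

lemma SimilarOver.of_linearEquiv (e : MatrixModule A K ≃ₗ[FreeAlgebra K I] MatrixModule B K) :
    SimilarOver K A B := by
  obtain ⟨e, he⟩ := FamilyModule.nonempty_linearEquiv_iff.mp ⟨e⟩
  refine ⟨⟨LinearMap.toMatrix' e.toLinearMap, LinearMap.toMatrix' e.symm.toLinearMap, ?_, ?_⟩,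
    fun i => ?_⟩
  · simp [← LinearMap.toMatrix'_comp]
  · simp [← LinearMap.toMatrix'_comp]
  · have : e.toLinearMap ∘ₗ toLin' (A i) = toLin' (B i) ∘ₗ e :=
      LinearMap.ext (by simpa using he i)
    simpa [LinearMap.toMatrix'_comp] using congrArg LinearMap.toMatrix' this

variable (A) in
noncomputable def MatrixModule.baseChangeEquiv {C κ : Type*} [CommRing C] [Algebra K C]
    [Finite κ] (b : Module.Basis κ K C) :
    MatrixModule A C ≃ₗ[FreeAlgebra K I] (κ → MatrixModule A K) :=
  FreeAlgebra.linearEquivOfMapιSmul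
    ((FamilyModule.of _).symm ≪≫ₗ b.transposeEquivFun ι ≪≫ₗ
      LinearEquiv.piCongrRight (fun _ => FamilyModule.of _))
    fun i x => by
      obtain ⟨x, rfl⟩ := (FamilyModule.of _).surjective x
      ext t : 1
      simp only [LinearEquiv.trans_apply, LinearEquiv.piCongrRight_apply, Pi.smul_apply,
        FamilyModule.ι_smul_of, LinearEquiv.symm_apply_apply]
      congr 1
      ext j
      simp [mulVec, dotProduct, Module.Basis.transposeEquivFun, ← Algebra.smul_def]

lemma SimilarOver.exists_finiteType_subalgebra {L : Type*} [CommRing L] [Algebra K L]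
    (h : SimilarOver L A B) :
    ∃ S : Subalgebra K L, Algebra.FiniteType K S ∧ SimilarOver S A B := by
  obtain ⟨P, hP⟩ := h
  let entries (M : Matrix ι ι L) : Set L := Set.range fun q : ι × ι => M q.1 q.2
  let S := Algebra.adjoin K (entries P ∪ entries ↑P⁻¹)
  let lift (M : Matrix ι ι L) (hM : entries M ⊆ entries P ∪ entries ↑P⁻¹) : Matrix ι ι S :=
    .of fun j k => ⟨M j k, Algebra.subset_adjoin (hM ⟨(j, k), rfl⟩)⟩
  let f := (algebraMap S L).mapMatrix (m := ι)
  have inj : Function.Injective f := Matrix.map_injective Subtype.val_injective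
  have hf (M : Matrix ι ι K) : f (M.map (algebraMap K S)) = M.map (algebraMap K L) :=
    Matrix.ext fun _ _ => (IsScalarTower.algebraMap_apply K S L _).symm
  have hP' : f (lift P Set.subset_union_left) = P := rfl
  have hP'' : f (lift _ Set.subset_union_right) = ↑P⁻¹ := rfl
  refine ⟨S, .adjoin_of_finite ((Set.finite_range _).union (Set.finite_range _)),
    ⟨⟨lift P Set.subset_union_left, lift _ Set.subset_union_right, inj ?_, inj ?_⟩,
      fun i => inj ?_⟩⟩
  · rw [map_mul, map_one, hP', hP'', Units.mul_inv]
  · rw [map_mul, map_one, hP'', hP', Units.inv_mul]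
  · simpa only [map_mul, hP', hf] using hP i

end SimilarOver

section Descent

variable {K : Type*} [Field K] {ι : Type*} [Fintype ι] [DecidableEq ι] {I : Type*}
  {A B : I → Matrix ι ι K} {L : Type*} [CommRing L] [Nontrivial L] [Algebra K L]

lemma SimilarOver.of_infinite [Infinite K] (h : SimilarOver L A B) : SimilarOver K A B := by
  obtain ⟨P, hP⟩ := h
  let b := Module.Basis.ofVectorSpace K L
  let X t : Matrix ι ι K := (P : Matrix ι ι L).map (b.coord t)
  have hX : ∀ t i, X t * A i = B i * X t := fun t i => by
    simpa [X, Matrix.map_linearMap_mul_map_algebraMap, Matrix.map_linearMap_map_algebraMap_mul]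
      using congrArg (Matrix.map · (b.coord t)) (hP i)
  obtain ⟨T, hT⟩ := b.exists_finset_eq_sum_smul_map_coord (P : Matrix ι ι L)
  obtain ⟨a, ha⟩ := Matrix.exists_isUnit_det_sum_smul T X b
    (hT ▸ (Matrix.isUnit_iff_isUnit_det _).mp P.isUnit)
  refine ⟨((Matrix.isUnit_iff_isUnit_det _).mpr ha).unit, fun i => ?_⟩
  simp [Finset.sum_mul, Finset.mul_sum, hX]

lemma SimilarOver.of_finiteDimensional [Finite K] [Module.Finite K L] (h : SimilarOver L A B) :
    SimilarOver K A B := by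
  obtain ⟨e⟩ := h.nonempty_linearEquiv
  let b := Module.Free.chooseBasis K L
  have := b.index_nonempty
  obtain ⟨e'⟩ := nonempty_linearEquiv_of_pi
    ((MatrixModule.baseChangeEquiv A b).symm ≪≫ₗ e ≪≫ₗ MatrixModule.baseChangeEquiv B b)
  exact .of_linearEquiv e'

lemma SimilarOver.of_finite [Finite K] (h : SimilarOver L A B) : SimilarOver K A B := by
  obtain ⟨S, hS, hSim⟩ := h.exists_finiteType_subalgebra
  obtain ⟨m, hm⟩ := Ideal.exists_maximal S
  let := Ideal.Quotient.field m
  have : Module.Finite K (S ⧸ m) := finite_of_finite_type_of_isJacobsonRing K (S ⧸ m)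
  exact (hSim.map (Ideal.Quotient.mkₐ K m)).of_finiteDimensional

end Descent

/-- Simultaneous similarity of families of square matrices is invariant under
field extension. -/
theorem stmt_1 {K L : Type*} [Field K] [Field L] [Algebra K L] {n : ℕ} {I : Type*}
    (A B : I → Matrix (Fin n) (Fin n) K) :
    (∃ P : (Matrix (Fin n) (Fin n) K)ˣ,
        ∀ i, (P : Matrix (Fin n) (Fin n) K) * A i * (P⁻¹ : Matrix (Fin n) (Fin n) K) = B i) ↔
    (∃ P : (Matrix (Fin n) (Fin n) L)ˣ,
        ∀ i, (P : Matrix (Fin n) (Fin n) L) * (A i).map (algebraMap K L) * (P⁻¹ : Matrix (Fin n) (Fin n) L) =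
          (B i).map (algebraMap K L)) := by
  rw [← similarOver_self_iff_exists_conj, ← similarOver_iff_exists_conj]
  refine ⟨fun h => h.map (Algebra.ofId K L), fun h => ?_⟩
  cases finite_or_infinite K
  · exact h.of_finite
  · exact h.of_infinite
end

section
/- Let L/K be a separable quadratic field extension with nontrivial K-automorphism σ, and ε ∈ L \ K. Let M ∈ GL_q(K), let N ∈ M_{n-q}(K) be nilpotent, and set P = diag(M + ε I_q, I_{n-q} + ε N) ∈ GL_n(L). Then any matrix A ∈ M_n(K) that commutes with σ(P)^{-1} P (where σ is applied entrywise) also commutes with P. -/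
open Matrix


/-- Over a separable quadratic extension `L/K` with nontrivial automorphism `σ` and
`ε ∈ L \ K`, for `P = diag(M + ε I, I + ε N)` with `M` invertible and `N` nilpotent over
`K`, any `K`-matrix commuting with `σ(P)⁻¹ P` also commutes with `P`. -/
theorem stmt_5 {K L : Type*} [Field K] [Field L] [Algebra K L]
    [Algebra.IsSeparable K L] (hrank : Module.finrank K L = 2)
    (σ : L ≃ₐ[K] L) (hσ : σ ≠ AlgEquiv.refl)
    (ε : L) (hε : ε ∉ (algebraMap K L).range)
    {n q : ℕ} (hq : q ≤ n)
    (M : Matrix (Fin q) (Fin q) K) (hM : IsUnit M)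
    (N : Matrix (Fin (n - q)) (Fin (n - q)) K) (hN : IsNilpotent N)
    (P : Matrix (Fin q ⊕ Fin (n - q)) (Fin q ⊕ Fin (n - q)) L)
    (hP : P = Matrix.fromBlocks (M.map (algebraMap K L) + ε • 1) 0 0
      (1 + ε • N.map (algebraMap K L)))
    (hPu : IsUnit P)
    (A : Matrix (Fin q ⊕ Fin (n - q)) (Fin q ⊕ Fin (n - q)) K)
    (hA : Commute (A.map (algebraMap K L)) ((P.map σ)⁻¹ * P)) :
    Commute (A.map (algebraMap K L)) P := by
  have hσε : σ ε ≠ ε := by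
    intro hc
    apply hσ
    have hli : LinearIndependent K ![ε, (1 : L)] := by
      rw [linearIndependent_fin2]
      refine ⟨one_ne_zero, fun a ha => hε ⟨a, ?_⟩⟩
      simp only [Matrix.cons_val_one, Matrix.head_cons, Matrix.cons_val_zero] at ha
      rw [← ha, Algebra.smul_def, mul_one]
    have hcard : Fintype.card (Fin 2) = Module.finrank K L := by
      simp [hrank]
    have hlm : σ.toLinearMap = (AlgEquiv.refl : L ≃ₐ[K] L).toLinearMap := by
      apply (basisOfLinearIndependentOfCardEqFinrank hli hcard).ext
      intro i
      rw [coe_basisOfLinearIndependentOfCardEqFinrank]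
      fin_cases i <;> simp [hc]
    ext x
    have := DFunLike.congr_fun hlm x
    simpa using this
  set f : K →+* L := algebraMap K L with hf
  have hinj : Function.Injective f := f.injective
  set B : Matrix (Fin q ⊕ Fin (n - q)) (Fin q ⊕ Fin (n - q)) K := fromBlocks M 0 0 1 with hB
  set C : Matrix (Fin q ⊕ Fin (n - q)) (Fin q ⊕ Fin (n - q)) K := fromBlocks 1 0 0 N with hC
  set A' := A.map f
  set B' := B.map f with hB'
  set C' := C.map f with hC'
  -- P = B' + ε • C'
  have hPBC : P = B' + ε • C' := by
    rw [hP, hB', hC', hB, hC]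
    ext (i|i) (j|j) <;>
      simp [Matrix.fromBlocks, Matrix.map_apply, Matrix.one_apply, mul_comm, apply_ite f]
  -- P.map σ = B' + σ ε • C'
  have hQdef : P.map σ = B' + σ ε • C' := by
    ext i j
    simp [hPBC, Matrix.map_apply, Matrix.add_apply, Matrix.smul_apply, smul_eq_mul,
      map_add, _root_.map_mul, hB', hC', AlgEquiv.commutes, hf]
  set Q := P.map σ with hQ
  -- B and C commute
  have hBC : B * C = C * B := by
    rw [hB, hC]
    simp [Matrix.fromBlocks_multiply]
  have hBCL : B' * C' = C' * B' := by
    rw [hB', hC', ← Matrix.map_mul (f := f), ← Matrix.map_mul (f := f), hBC]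
  -- P and Q commute
  have hQP : Q * P = P * Q := by
    rw [hQdef, hPBC]
    simp only [mul_add, add_mul, smul_mul_assoc, mul_smul_comm, smul_smul, hBCL, mul_comm]
    module
  -- Q is a unit
  have hQu : IsUnit Q := by
    have := hPu.map ((σ : L →+* L).mapMatrix)
    simpa [RingHom.mapMatrix_apply, hQ] using this
  have hQd : IsUnit Q.det := (Matrix.isUnit_iff_isUnit_det Q).mp hQu
  have e1 : Q⁻¹ * P * Q = P := by
    rw [mul_assoc, ← hQP, ← mul_assoc, Matrix.nonsing_inv_mul _ hQd, one_mul]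
  have e2 : Q * (Q⁻¹ * P) = P := by
    rw [← mul_assoc, Matrix.mul_nonsing_inv _ hQd, one_mul]
  have hQXP : Q * A' * P = P * A' * Q := by
    calc Q * A' * P = Q * A' * (Q⁻¹ * P * Q) := by rw [e1]
      _ = Q * (A' * (Q⁻¹ * P)) * Q := by simp only [mul_assoc]
      _ = Q * ((Q⁻¹ * P) * A') * Q := by rw [hA.eq]
      _ = (Q * (Q⁻¹ * P)) * A' * Q := by rw [mul_assoc, ← mul_assoc Q, ← mul_assoc]
      _ = P * A' * Q := by rw [e2]
  have expand3 : ∀ x y : L, (B' + x • C') * A' * (B' + y • C')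
      = B' * A' * B' + y • (B' * A' * C') + x • (C' * A' * B') + (x * y) • (C' * A' * C') := by
    intro x y
    simp only [mul_add, add_mul, smul_mul_assoc, mul_smul_comm, smul_smul]
    module
  have hQXP' : B' * A' * B' + ε • (B' * A' * C') + σ ε • (C' * A' * B')
      + (σ ε * ε) • (C' * A' * C')
      = B' * A' * B' + σ ε • (B' * A' * C') + ε • (C' * A' * B')
      + (ε * σ ε) • (C' * A' * C') := by
    rw [← expand3, ← expand3, ← hQdef, ← hPBC]
    exact hQXP
  have hsub : (σ ε - ε) • (C' * A' * B') = (σ ε - ε) • (B' * A' * C') := by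
    linear_combination (norm := module) hQXP'
  have hCAB : C' * A' * B' = B' * A' * C' :=
    smul_right_injective _ (sub_ne_zero.mpr hσε) hsub
  have hKey : C * A * B = B * A * C := by
    have h : (C * A * B).map f = (B * A * C).map f := by
      rw [Matrix.map_mul (f := f), Matrix.map_mul (f := f), Matrix.map_mul (f := f),
        Matrix.map_mul (f := f)]
      exact hCAB
    ext i j
    exact hinj (congrFun (congrFun h i) j)
  set A11 := A.toBlocks₁₁ with hA11
  set A12 := A.toBlocks₁₂ with hA12'
  set A21 := A.toBlocks₂₁ with hA21'
  set A22 := A.toBlocks₂₂ with hA22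
  have hAblocks : A = fromBlocks A11 A12 A21 A22 := (fromBlocks_toBlocks A).symm
  rw [hAblocks, hB, hC] at hKey
  simp only [Matrix.fromBlocks_multiply, Matrix.one_mul, Matrix.mul_one, Matrix.zero_mul,
    Matrix.mul_zero, add_zero, zero_add] at hKey
  rw [Matrix.fromBlocks_inj] at hKey
  obtain ⟨h1, h2, h3, h4⟩ := hKey
  obtain ⟨k, hk⟩ := hN
  have h12 : ∀ j : ℕ, A12 = M ^ j * A12 * N ^ j := by
    intro j
    induction j with
    | zero => simp
    | succ j ih =>
      calc A12 = M ^ j * A12 * N ^ j := ih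
        _ = M ^ j * (M * A12 * N) * N ^ j := by rw [← h2]
        _ = M ^ (j + 1) * A12 * N ^ (j + 1) := by
            rw [pow_succ, pow_succ']
            simp only [Matrix.mul_assoc]
  have hA12 : A12 = 0 := by rw [h12 k, hk, Matrix.mul_zero]
  have h21 : ∀ j : ℕ, A21 = N ^ j * A21 * M ^ j := by
    intro j
    induction j with
    | zero => simp
    | succ j ih =>
      calc A21 = N ^ j * A21 * M ^ j := ih
        _ = N ^ j * (N * A21 * M) * M ^ j := by rw [h3]
        _ = N ^ (j + 1) * A21 * M ^ (j + 1) := by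
            rw [pow_succ, pow_succ' M]
            simp only [Matrix.mul_assoc]
  have hA21 : A21 = 0 := by rw [h21 k, hk, Matrix.zero_mul, Matrix.zero_mul]
  have hAB : A * B = B * A := by
    rw [hAblocks, hA12, hA21, hB]
    simp [Matrix.fromBlocks_multiply, h1]
  have hAC : A * C = C * A := by
    rw [hAblocks, hA12, hA21, hC]
    simp [Matrix.fromBlocks_multiply, h4]
  have hABL : A' * B' = B' * A' := by
    rw [hB', ← Matrix.map_mul (f := f), ← Matrix.map_mul (f := f), hAB]
  have hACL : A' * C' = C' * A' := by
    rw [hC', ← Matrix.map_mul (f := f), ← Matrix.map_mul (f := f), hAC]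
  show A' * P = P * A'
  rw [hPBC, mul_add, add_mul, mul_smul_comm, smul_mul_assoc, hABL, hACL]
end

section
/- Let K be a field, L a quadratic separable extension with nontrivial automorphism σ, ε ∈ L \ K, and P ∈ GL_n(L) with σ(ε) ≠ ε. If A ∈ M_n(K) commutes with σ(P)^{-1} P, then A commutes with P^{-1} σ(P), and hence with P^{-1} R, where P = Q + ε R is the decomposition of P with Q, R ∈ M_n(K). -/
/-- If `A ∈ M_n(K)` commutes with `σ(P)⁻¹ P` for an invertible `P = Q + ε R` over a
separable quadratic extension `L = K(ε)` with `σ(ε) ≠ ε`, then `A` commutes with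
`P⁻¹ σ(P)` and hence with `P⁻¹ R`. -/
theorem stmt_6 {K L : Type*} [Field K] [Field L] [Algebra K L]
    [Algebra.IsSeparable K L] (hrank : Module.finrank K L = 2)
    (σ : L ≃ₐ[K] L) (hσ : σ ≠ AlgEquiv.refl)
    (ε : L) (hε : ε ∉ (algebraMap K L).range) (hσε : σ ε ≠ ε)
    {n : ℕ} (P : Matrix (Fin n) (Fin n) L) (hPu : IsUnit P)
    (Q R : Matrix (Fin n) (Fin n) K)
    (hQR : P = Q.map (algebraMap K L) + ε • R.map (algebraMap K L))
    (A : Matrix (Fin n) (Fin n) K)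
    (hA : Commute (A.map (algebraMap K L)) ((P.map σ)⁻¹ * P)) :
    Commute (A.map (algebraMap K L)) (P⁻¹ * P.map σ) ∧
      Commute (A.map (algebraMap K L)) (P⁻¹ * R.map (algebraMap K L)) := by
  set A' := A.map (algebraMap K L) with hA'
  -- P.map σ is a unit
  have hPσu : IsUnit (P.map σ) := by
    have := hPu.map (RingHom.mapMatrix (σ : L →+* L))
    simpa [RingHom.mapMatrix_apply] using this
  have hdet : IsUnit P.det := (Matrix.isUnit_iff_isUnit_det P).1 hPu
  have hdetσ : IsUnit (P.map σ).det := (Matrix.isUnit_iff_isUnit_det _).1 hPσu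
  -- first commute
  have h1 : Commute A' (P⁻¹ * P.map σ) := by
    have : Invertible (P.map σ) := hPσu.invertible
    have : Invertible P := hPu.invertible
    have hBi : Invertible ((P.map σ)⁻¹ * P) := by
      rw [← Matrix.invOf_eq_nonsing_inv]
      exact invertibleMul _ _
    have heq : P⁻¹ * P.map σ = ((P.map σ)⁻¹ * P)⁻¹ := by
      rw [Matrix.mul_inv_rev, Matrix.nonsing_inv_nonsing_inv _ hdetσ]
    rw [heq, ← Matrix.invOf_eq_nonsing_inv]
    exact hA.invOf_right
  refine ⟨h1, ?_⟩
  -- compute P.map σ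
  have hmapσ : P.map σ = Q.map (algebraMap K L) + σ ε • R.map (algebraMap K L) := by
    rw [hQR]
    ext i j
    simp [Matrix.map_apply, map_add, map_mul, σ.commutes]
  have hone : Commute A' (P⁻¹ * P) := by
    rw [Matrix.nonsing_inv_mul P hdet]; exact Commute.one_right _
  have hsub : Commute A' (P⁻¹ * P.map σ - P⁻¹ * P) := h1.sub_right hone
  have hdiff : P⁻¹ * P.map σ - P⁻¹ * P = (σ ε - ε) • (P⁻¹ * R.map (algebraMap K L)) := by
    rw [← Matrix.mul_sub, ← Matrix.mul_smul]
    congr 1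
    rw [hmapσ]
    rw [hQR]
    rw [add_sub_add_left_eq_sub, ← sub_smul]
  rw [hdiff] at hsub
  have hc : Commute A' ((σ ε - ε)⁻¹ • ((σ ε - ε) • (P⁻¹ * R.map (algebraMap K L)))) :=
    hsub.smul_right _
  rwa [smul_smul, inv_mul_cancel₀ (sub_ne_zero.2 hσε), one_smul] at hc
end

section
/- Two families (A_i)_{i∈I} of n×p matrices over a field K are simultaneously equivalent to (B_i)_{i∈I} if and only if the augmented families of (n+p)×(n+p) matrices C_a = D_a = diag(I_n, 0) and C_i = [[0, A_i],[0,0]], D_i = [[0, B_i],[0,0]] (for i ∈ I) are simultaneously similar. -/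
open Matrix

/-- Two families of `n × p` matrices are simultaneously equivalent iff the augmented
families `C none = D none = diag(I_n, 0)`, `C (some i) = [[0, A i],[0,0]]`,
`D (some i) = [[0, B i],[0,0]]` of `(n+p) × (n+p)` matrices are simultaneously similar. -/
theorem stmt_9 {K : Type*} [Field K] {n p : ℕ} {I : Type*}
    (A B : I → Matrix (Fin n) (Fin p) K)
    (C D : Option I → Matrix (Fin n ⊕ Fin p) (Fin n ⊕ Fin p) K)
    (hCa : C none = Matrix.fromBlocks 1 0 0 0)
    (hDa : D none = Matrix.fromBlocks 1 0 0 0)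
    (hC : ∀ i, C (some i) = Matrix.fromBlocks 0 (A i) 0 0)
    (hD : ∀ i, D (some i) = Matrix.fromBlocks 0 (B i) 0 0) :
    (∃ (P : (Matrix (Fin n) (Fin n) K)ˣ) (Q : (Matrix (Fin p) (Fin p) K)ˣ),
        ∀ i, (P : Matrix (Fin n) (Fin n) K) * A i * (Q : Matrix (Fin p) (Fin p) K) = B i) ↔
    (∃ R : (Matrix (Fin n ⊕ Fin p) (Fin n ⊕ Fin p) K)ˣ,
        ∀ j, (R : Matrix (Fin n ⊕ Fin p) (Fin n ⊕ Fin p) K) * C j *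
          (R⁻¹ : (Matrix (Fin n ⊕ Fin p) (Fin n ⊕ Fin p) K)ˣ) = D j) := by
  constructor
  · rintro ⟨P, Q, hPQ⟩
    refine ⟨⟨fromBlocks (P : Matrix (Fin n) (Fin n) K) 0 0 ((Q⁻¹ : (Matrix (Fin p) (Fin p) K)ˣ) : Matrix (Fin p) (Fin p) K),
            fromBlocks ((P⁻¹ : (Matrix (Fin n) (Fin n) K)ˣ) : Matrix (Fin n) (Fin n) K) 0 0 (Q : Matrix (Fin p) (Fin p) K), ?_, ?_⟩, ?_⟩
    · rw [fromBlocks_multiply]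
      simp [← fromBlocks_one, ← Matrix.coe_units_inv, Units.mul_inv, Units.inv_mul]
    · rw [fromBlocks_multiply]
      simp [← fromBlocks_one, ← Matrix.coe_units_inv, Units.mul_inv, Units.inv_mul]
    · rintro (_ | i)
      · show fromBlocks _ _ _ _ * C none * fromBlocks _ _ _ _ = D none
        rw [hCa, hDa, fromBlocks_multiply, fromBlocks_multiply]
        simp [← Matrix.coe_units_inv, Units.mul_inv]
      · show fromBlocks _ _ _ _ * C (some i) * fromBlocks _ _ _ _ = D (some i)
        rw [hC, hD, fromBlocks_multiply, fromBlocks_multiply]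
        simp [mul_assoc, hPQ i, ← mul_assoc]
  · rintro ⟨R, hR⟩
    set M : Matrix (Fin n ⊕ Fin p) (Fin n ⊕ Fin p) K := (R : Matrix (Fin n ⊕ Fin p) (Fin n ⊕ Fin p) K) with hMdef
    set N : Matrix (Fin n ⊕ Fin p) (Fin n ⊕ Fin p) K :=
      ((R⁻¹ : (Matrix (Fin n ⊕ Fin p) (Fin n ⊕ Fin p) K)ˣ) : Matrix (Fin n ⊕ Fin p) (Fin n ⊕ Fin p) K) with hNdef
    have hMN : M * N = 1 := R.mul_inv
    have hNM : N * M = 1 := R.inv_mul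
    have hnone : M * fromBlocks 1 0 0 0 * N = fromBlocks 1 0 0 0 := by
      have := hR none; rwa [hCa, hDa] at this
    have hcomm : M * fromBlocks 1 0 0 0 = fromBlocks 1 0 0 0 * M := by
      have h := congrArg (· * M) hnone
      simpa [mul_assoc, hNM] using h
    have hMb : M = fromBlocks M.toBlocks₁₁ M.toBlocks₁₂ M.toBlocks₂₁ M.toBlocks₂₂ :=
      (fromBlocks_toBlocks M).symm
    have hNb : N = fromBlocks N.toBlocks₁₁ N.toBlocks₁₂ N.toBlocks₂₁ N.toBlocks₂₂ :=
      (fromBlocks_toBlocks N).symm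
    rw [hMb, fromBlocks_multiply, fromBlocks_multiply] at hcomm
    have h12 : M.toBlocks₁₂ = 0 := by
      have := congrArg Matrix.toBlocks₁₂ hcomm
      simpa using this.symm
    have h21 : M.toBlocks₂₁ = 0 := by
      have := congrArg Matrix.toBlocks₂₁ hcomm
      simpa using this
    -- block equations from M * N = 1 and N * M = 1
    have hMN' := hMN
    have hNM' := hNM
    rw [hMb, hNb, h12, h21, fromBlocks_multiply, ← fromBlocks_one] at hMN' hNM'
    have e11 : M.toBlocks₁₁ * N.toBlocks₁₁ = 1 := by
      have := congrArg Matrix.toBlocks₁₁ hMN'; simpa [-Matrix.fromBlocks_one] using this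
    have e11' : N.toBlocks₁₁ * M.toBlocks₁₁ = 1 := by
      have := congrArg Matrix.toBlocks₁₁ hNM'; simpa [-Matrix.fromBlocks_one] using this
    have e22 : M.toBlocks₂₂ * N.toBlocks₂₂ = 1 := by
      have := congrArg Matrix.toBlocks₂₂ hMN'; simpa [-Matrix.fromBlocks_one] using this
    have e22' : N.toBlocks₂₂ * M.toBlocks₂₂ = 1 := by
      have := congrArg Matrix.toBlocks₂₂ hNM'; simpa [-Matrix.fromBlocks_one] using this
    refine ⟨⟨M.toBlocks₁₁, N.toBlocks₁₁, e11, e11'⟩,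
            ⟨N.toBlocks₂₂, M.toBlocks₂₂, e22', e22⟩, fun i => ?_⟩
    have hi : M * C (some i) * N = D (some i) := hR (some i)
    rw [hC, hD, hMb, hNb, h12, h21, fromBlocks_multiply, fromBlocks_multiply] at hi
    have := congrArg Matrix.toBlocks₁₂ hi
    simpa [mul_assoc] using this
end

section
/- With the towers E_k, F_k as above (E_{k+1} = B^{-1}(F_k), F_{k+1} = A(E_{k+1}), E_0 = F_0 = 0) and N the stabilization index, there exist complements E' of E_N in E and F' of F_N in F such that A(E') ⊆ F' and B(E') ⊆ F'. -/
/-!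
Write `E_k = wongSeq A B k`; then `F_k = A(E_k)` and `E_{k+1} = B⁻¹(A(E_k))`. We build pairs
`(E', F')` with `E' ∩ E_N = E_k`, `E' + E_N = E`, `F' ∩ F_N = F_k`, `F' + F_N = F` and
`A(E'), B(E') ⊆ F'` by downward induction on `k`, starting from `(E, F)` at `k = N`; at `k = 0`
they are the required complements.

To pass from `k + 1` to `k`, take `F'` between `F_k + B(E'')` and `F''` complementing `F_{k+1}`
there. This works because `B x ∈ F_{k+1}` forces `x ∈ E_{k+2} ⊆ E_N`, hence `x ∈ E_{k+1}`
and `B x ∈ F_k`. Then `E'' ∩ A⁻¹(F')` still spans `E` together with `E_N`, because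
`A(E'') ⊆ F' + A(E_{k+1})`; any complement of its intersection with `E_N` above `E_k` serves
as `E'`.
-/

open Submodule

theorem exists_le_le_inf_eq_sup_eq {α : Type*} [Lattice α] [BoundedOrder α] [IsModularLattice α]
    [ComplementedLattice α] {a b c : α} (hac : a ≤ c) (hbc : b ≤ c) :
    ∃ x, a ≤ x ∧ x ≤ c ∧ x ⊓ b = a ⊓ b ∧ x ⊔ b = c := by
  obtain ⟨z, hz⟩ := exists_isCompl (a ⊔ b)
  refine ⟨a ⊔ z ⊓ c, le_sup_left, sup_le hac inf_le_right, le_antisymm ?_ ?_, ?_⟩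
  · have hx : (a ⊔ z ⊓ c) ⊓ (a ⊔ b) = a := by
      rw [sup_inf_assoc_of_le _ le_sup_left, (hz.disjoint.symm.mono_left inf_le_left).eq_bot,
        sup_bot_eq]
    exact le_inf ((inf_le_inf_left _ le_sup_right).trans hx.le) inf_le_right
  · exact inf_le_inf_right _ le_sup_left
  · rw [sup_right_comm, ← sup_inf_assoc_of_le _ (sup_le hac hbc), hz.sup_eq_top, top_inf_eq]

theorem Submodule.le_inf_comap_sup_of_map_le {R M N : Type*} [Ring R] [AddCommGroup M]
    [Module R M] [AddCommGroup N] [Module R N] {f : M →ₗ[R] N} {p r : Submodule R M}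
    {q : Submodule R N} (hrp : r ≤ p) (h : p.map f ≤ q ⊔ r.map f) :
    p ≤ p ⊓ q.comap f ⊔ r := by
  intro x hx
  obtain ⟨y, hy, _, ⟨e, he, rfl⟩, hxy⟩ := mem_sup.mp (h (mem_map_of_mem hx))
  have hfx : f (x - e) = y := by rw [map_sub, ← hxy, add_sub_cancel_right]
  rw [← sub_add_cancel x e]
  exact add_mem_sup ⟨sub_mem hx (hrp he), show f (x - e) ∈ q from hfx ▸ hy⟩ he

section Pencil

variable {K E F : Type*} [Field K] [AddCommGroup E] [Module K E] [AddCommGroup F] [Module K F]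

def wongSeq (A B : E →ₗ[K] F) : ℕ → Submodule K E
  | 0 => ⊥
  | k + 1 => ((wongSeq A B k).map A).comap B

section wongSeq

variable (A B : E →ₗ[K] F)

@[simp] theorem wongSeq_zero : wongSeq A B 0 = ⊥ := rfl

theorem wongSeq_succ (k : ℕ) : wongSeq A B (k + 1) = ((wongSeq A B k).map A).comap B := rfl

theorem wongSeq_mono : Monotone (wongSeq A B) := by
  refine monotone_nat_of_le_succ fun k => ?_
  induction k with
  | zero => exact bot_le
  | succ k ih => exact comap_mono (map_mono ih)

theorem map_wongSeq_succ_le (k : ℕ) :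
    (wongSeq A B (k + 1)).map B ≤ (wongSeq A B k).map A :=
  map_comap_le _ _

theorem wongSeq_le_of_succ_eq {N j : ℕ} (hN : wongSeq A B (N + 1) = wongSeq A B N)
    (hj : j ≤ N + 1) : wongSeq A B j ≤ wongSeq A B N := by
  rcases hj.lt_or_eq with hj | rfl
  · exact wongSeq_mono A B (Nat.le_of_lt_succ hj)
  · exact hN.le

theorem map_inf_map_wongSeq_succ_le {N k : ℕ} {E' : Submodule K E}
    (hN : wongSeq A B (N + 1) = wongSeq A B N) (hk : k < N)
    (hE' : E' ⊓ wongSeq A B N = wongSeq A B (k + 1)) :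
    E'.map B ⊓ (wongSeq A B (k + 1)).map A ≤ (wongSeq A B k).map A := by
  rintro _ ⟨⟨x, hx, rfl⟩, hBx⟩
  have hxN : x ∈ wongSeq A B N := wongSeq_le_of_succ_eq A B hN (j := k + 2) (by omega) hBx
  have hx' : x ∈ wongSeq A B (k + 1) := hE' ▸ mem_inf.mpr ⟨hx, hxN⟩
  exact map_wongSeq_succ_le A B k (mem_map_of_mem hx')

end wongSeq

structure IsPencilComplAt (A B : E →ₗ[K] F) (N k : ℕ) (E' : Submodule K E)
    (F' : Submodule K F) : Prop where
  inf_eq : E' ⊓ wongSeq A B N = wongSeq A B k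
  sup_eq : E' ⊔ wongSeq A B N = ⊤
  inf_map_eq : F' ⊓ (wongSeq A B N).map A = (wongSeq A B k).map A
  sup_map_eq : F' ⊔ (wongSeq A B N).map A = ⊤
  map_left_le : E'.map A ≤ F'
  map_right_le : E'.map B ≤ F'

namespace IsPencilComplAt

variable {A B : E →ₗ[K] F} {N k : ℕ} {E' : Submodule K E} {F' : Submodule K F}

theorem top_top (A B : E →ₗ[K] F) (N : ℕ) : IsPencilComplAt A B N N ⊤ ⊤ := by
  constructor <;> simp

theorem isCompl (h : IsPencilComplAt A B N 0 E' F') :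
    IsCompl (wongSeq A B N) E' ∧ IsCompl ((wongSeq A B N).map A) F' := by
  have hE := h.inf_eq
  have hF := h.inf_map_eq
  simp only [wongSeq_zero, Submodule.map_bot] at hE hF
  exact ⟨⟨disjoint_iff.mpr (by rw [inf_comm, hE]),
      codisjoint_iff.mpr (by rw [sup_comm, h.sup_eq])⟩,
    ⟨disjoint_iff.mpr (by rw [inf_comm, hF]),
      codisjoint_iff.mpr (by rw [sup_comm, h.sup_map_eq])⟩⟩

theorem exists_pred (hN : wongSeq A B (N + 1) = wongSeq A B N) (hk : k < N)
    (h : IsPencilComplAt A B N (k + 1) E' F') :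
    ∃ E₀ F₀, IsPencilComplAt A B N k E₀ F₀ := by
  have hWk : wongSeq A B k ≤ wongSeq A B (k + 1) := wongSeq_mono A B k.le_succ
  have hWk1 : wongSeq A B (k + 1) ≤ wongSeq A B N := wongSeq_mono A B hk
  have hE'k1 : wongSeq A B (k + 1) ≤ E' := h.inf_eq ▸ inf_le_left
  have hF'k1 : (wongSeq A B (k + 1)).map A ≤ F' := h.inf_map_eq ▸ inf_le_left
  obtain ⟨F₀, hleF₀, hF₀, hinfF₀, hsupF₀⟩ := exists_le_le_inf_eq_sup_eq
    (sup_le ((map_mono hWk).trans hF'k1) h.map_right_le) hF'k1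
  rw [sup_inf_assoc_of_le _ (map_mono hWk),
    sup_eq_left.mpr (map_inf_map_wongSeq_succ_le A B hN hk h.inf_eq)] at hinfF₀
  set G := E' ⊓ F₀.comap A
  have hWG : wongSeq A B k ≤ G ⊓ wongSeq A B N :=
    le_inf (le_inf (hWk.trans hE'k1) (map_le_iff_le_comap.mp (le_sup_left.trans hleF₀)))
      (hWk.trans hWk1)
  have hGsup : E' ≤ G ⊔ wongSeq A B (k + 1) :=
    le_inf_comap_sup_of_map_le hE'k1 (hsupF₀ ▸ h.map_left_le)
  obtain ⟨E₀, -, hE₀G, hinfE₀, hsupE₀⟩ :=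
    exists_le_le_inf_eq_sup_eq (b := G ⊓ wongSeq A B N) (hWG.trans inf_le_left) inf_le_left
  refine ⟨E₀, F₀, ⟨?_, ?_, ?_, ?_, ?_, ?_⟩⟩
  · calc E₀ ⊓ wongSeq A B N = E₀ ⊓ (G ⊓ wongSeq A B N) := by
          rw [← inf_assoc, inf_eq_left.mpr hE₀G]
      _ = wongSeq A B k := by rw [hinfE₀, inf_eq_left.mpr hWG]
  · rw [eq_top_iff, ← h.sup_eq]
    refine sup_le (hGsup.trans (sup_le ?_ (hWk1.trans le_sup_right))) le_sup_right
    exact hsupE₀.symm.le.trans (sup_le_sup_left inf_le_right _)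
  · calc F₀ ⊓ (wongSeq A B N).map A = F₀ ⊓ (F' ⊓ (wongSeq A B N).map A) := by
          rw [← inf_assoc, inf_eq_left.mpr hF₀]
      _ = (wongSeq A B k).map A := by rw [h.inf_map_eq, hinfF₀]
  · rw [eq_top_iff, ← h.sup_map_eq, ← hsupF₀, sup_assoc]
    exact sup_le_sup_left (sup_le (map_mono hWk1) le_rfl) _
  · exact map_le_iff_le_comap.mpr (hE₀G.trans inf_le_right)
  · exact (map_mono (hE₀G.trans inf_le_left)).trans (le_sup_right.trans hleF₀)

end IsPencilComplAt

theorem exists_isPencilComplAt_zero {A B : E →ₗ[K] F} {N : ℕ}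
    (hN : wongSeq A B (N + 1) = wongSeq A B N) :
    ∃ E' F', IsPencilComplAt A B N 0 E' F' :=
  Nat.decreasingInduction (motive := fun k _ => ∃ E' F', IsPencilComplAt A B N k E' F')
    (fun _ hk ⟨_, _, h⟩ => h.exists_pred hN hk) ⟨⊤, ⊤, .top_top A B N⟩ N.zero_le

end Pencil

theorem stmt_12_general {K E F : Type*} [Field K] [AddCommGroup E] [Module K E]
    [AddCommGroup F] [Module K F]
    (A B : E →ₗ[K] F)
    (Es : ℕ → Submodule K E) (Fs : ℕ → Submodule K F)
    (hE0 : Es 0 = ⊥) (hF0 : Fs 0 = ⊥)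
    (hE : ∀ k, Es (k + 1) = (Fs k).comap B)
    (hF : ∀ k, Fs (k + 1) = (Es (k + 1)).map A)
    (N : ℕ) (hN : Es (N + 1) = Es N) :
    ∃ (E' : Submodule K E) (F' : Submodule K F),
      IsCompl (Es N) E' ∧ IsCompl (Fs N) F' ∧
        E'.map A ≤ F' ∧ E'.map B ≤ F' := by
  have hFs : ∀ k, Fs k = (Es k).map A
    | 0 => by rw [hF0, hE0, Submodule.map_bot]
    | k + 1 => hF k
  have hEs : ∀ k, Es k = wongSeq A B k := by
    intro k
    induction k with
    | zero => exact hE0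
    | succ k ih => rw [hE, hFs, ih, wongSeq_succ]
  simp only [hFs, hEs] at hN ⊢
  obtain ⟨E', F', h⟩ := exists_isPencilComplAt_zero hN
  exact ⟨E', F', h.isCompl.1, h.isCompl.2, h.map_left_le, h.map_right_le⟩

/-- With the towers as above and `N` the stabilization index, there exist complements
`E'` of `E_N` and `F'` of `F_N` with `A(E') ⊆ F'` and `B(E') ⊆ F'`. -/
theorem stmt_12 {K E F : Type*} [Field K] [AddCommGroup E] [Module K E]
    [AddCommGroup F] [Module K F] [FiniteDimensional K E] [FiniteDimensional K F]
    (A B : E →ₗ[K] F)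
    (hker : LinearMap.ker A ⊓ LinearMap.ker B = ⊥)
    (hrange : LinearMap.range A ⊔ LinearMap.range B = ⊤)
    (Es : ℕ → Submodule K E) (Fs : ℕ → Submodule K F)
    (hE0 : Es 0 = ⊥) (hF0 : Fs 0 = ⊥)
    (hE : ∀ k, Es (k + 1) = (Fs k).comap B)
    (hF : ∀ k, Fs (k + 1) = (Es (k + 1)).map A)
    (N : ℕ) (hN : Es (N + 1) = Es N) :
    ∃ (E' : Submodule K E) (F' : Submodule K F),
      IsCompl (Es N) E' ∧ IsCompl (Fs N) F' ∧
        E'.map A ≤ F' ∧ E'.map B ≤ F' :=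
  stmt_12_general A B Es Fs hE0 hF0 hE hF N hN
end

section
/- Let A, B ∈ M_{n,p}(K) with ker A ∩ ker B = {0} as linear maps K^p → K^n. Let E_N, F_N be the stable subspaces of the towers E_{k+1} = B^{-1}(F_k), F_{k+1} = A(E_{k+1}) starting from E_0 = F_0 = 0, and let f, g : E_N → F_N be the maps induced by A and B. Then there exist bases of E_N and F_N in which the matrix pencil of f + X g is block diagonal with each nonzero block of the form J_r(1, X) (the r×r upper triangular Jordan-type block with 1 on the diagonal and X on the superdiagonal) or L_s + X K_s (where L_s = [I_s | 0] and K_s = [0 | I_s] are s×(s+1) matrices). -/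
/-!
The tower `E_k` increases, `f` induces surjections `E_{k+1}/E_k → f(E_{k+1})/f(E_k)` and, since
`E_{k+1} = g⁻¹(f(E_k))`, `g` induces injections `E_{k+2}/E_{k+1} → f(E_{k+1})/f(E_k)`. Going down
from the top of the tower, choose at each level `l` vectors `x l i` of `E_{l+1}` forming a basis
modulo `E_l`: first preimages under `f` of the `g`-images of the vectors of level `l+1`, then
preimages of further vectors completing a basis of `f(E_{l+1})` modulo `f(E_l)`, and finally
vectors of `ker f`. For each `i`, the chain `x 0 i, x 1 i, …` satisfies `g (x 0 i) = 0` and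
`f (x l i) = g (x (l+1) i)`. The chains form a basis of `E_N`, the nonzero `f`-images a basis of
`f(E_N)`, and a chain gives a block `J_r(1,X)` or `L_r + X K_r` according as its last vector has
nonzero image under `f` or lies in `ker f`.
-/

open Submodule Module Set

section QuotientIndependence

variable {K M : Type*} [Field K] [AddCommGroup M] [Module K M]

lemma mkQ_mem_span_mkQ_iff {ι : Type*} (U : Submodule K M) (v : ι → M) (z : M) :
    U.mkQ z ∈ span K (range (U.mkQ ∘ v)) ↔ z ∈ span K (range v) ⊔ U := by
  rw [range_comp, ← map_span, ← mem_comap, comap_map_mkQ, sup_comm]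

variable [FiniteDimensional K M]

lemma card_add_finrank_le_of_linearIndependent_mkQ {ι : Type*} [Fintype ι] {U U' : Submodule K M}
    (hU : U ≤ U') {v : ι → M} (hv : ∀ i, v i ∈ U')
    (hind : LinearIndependent K fun i => U.mkQ (v i)) :
    Fintype.card ι + finrank K U ≤ finrank K U' := by
  have hli := (finBasis K U).linearIndependent.sumElim_of_quotient v hind
  have hle : span K (range (Sum.elim (fun j => (finBasis K U j : M)) v)) ≤ U' := by
    rw [span_le, range_subset_iff]
    rintro (j | i)
    exacts [hU (finBasis K U j).2, hv i]
  simpa [finrank_span_eq_card hli, add_comm] using finrank_mono hle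

lemma span_sup_eq_of_linearIndependent_mkQ {ι : Type*} [Fintype ι] {U U' : Submodule K M}
    (hU : U ≤ U') {v : ι → M} (hv : ∀ i, v i ∈ U')
    (hind : LinearIndependent K fun i => U.mkQ (v i))
    (hcard : finrank K U' ≤ Fintype.card ι + finrank K U) :
    span K (range v) ⊔ U = U' := by
  have hle : span K (range v) ⊔ U ≤ U' := sup_le (span_le.2 (range_subset_iff.2 hv)) hU
  refine eq_of_le_of_finrank_le hle (hcard.trans ?_)
  exact card_add_finrank_le_of_linearIndependent_mkQ le_sup_right
    (fun i => mem_sup_left (subset_span (mem_range_self i))) hind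

-- Families are indexed by `ℕ`; only their first `s` (resp. `t`) vectors matter.
lemma exists_extend_linearIndependent_mkQ {U U' Z : Submodule K M} (hZ : Z ≤ U')
    {s t : ℕ} (hst : s ≤ t) (ht : t + finrank K U ≤ finrank K U') {v : ℕ → M}
    (hv : ∀ i < s, v i ∈ U') (hind : LinearIndependent K fun i : Fin s => U.mkQ (v i))
    (hspan : U' ≤ span K (range fun i : Fin s => v i) ⊔ U ⊔ Z) :
    ∃ v' : ℕ → M, (∀ i < s, v' i = v i) ∧ (∀ i < t, v' i ∈ U') ∧
      LinearIndependent K (fun i : Fin t => U.mkQ (v' i)) ∧ ∀ i, s ≤ i → v' i ∈ Z := by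
  induction t, hst using Nat.le_induction with
  | base =>
    refine ⟨fun i => if i < s then v i else 0, fun i hi => if_pos hi, fun i hi => ?_, ?_,
      fun i hi => ?_⟩
    · simpa [hi] using hv i hi
    · simpa [Fin.is_lt] using hind
    · simp [not_lt.2 hi]
  | succ t hst ih =>
    obtain ⟨v', hv's, hv'U', hv'ind, hv'Z⟩ := ih (by omega)
    have hnot : ¬ Z ≤ span K (range fun i : Fin t => v' i) ⊔ U := by
      intro hZle
      have hprefix : span K (range fun i : Fin s => v i) ≤ span K (range fun i : Fin t => v' i) :=
        span_le.2 <| range_subset_iff.2 fun i =>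
          subset_span ⟨Fin.castLE hst i, hv's i i.2⟩
      have hle := finrank_mono (hspan.trans (sup_le (sup_le (le_sup_of_le_left hprefix)
        le_sup_right) hZle))
      have := (finrank_add_le_finrank_add_finrank _ U).trans
        (Nat.add_le_add_right (finrank_range_le_card (R := K) fun i : Fin t => v' i) _)
      simp only [Fintype.card_fin] at this
      omega
    obtain ⟨z, hzZ, hz⟩ := SetLike.not_le_iff_exists.1 hnot
    refine ⟨Function.update v' t z, fun i hi => ?_, fun i hi => ?_, ?_, fun i hi => ?_⟩
    · rw [Function.update_of_ne (by omega), hv's i hi]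
    · rcases Nat.lt_succ_iff_lt_or_eq.1 hi with hi | rfl
      · rw [Function.update_of_ne hi.ne]; exact hv'U' i hi
      · rw [Function.update_self]; exact hZ hzZ
    · have hinit : (Fin.init fun i : Fin (t + 1) => U.mkQ (Function.update v' t z i)) =
          fun i : Fin t => U.mkQ (v' i) :=
        funext fun i => congrArg U.mkQ (Function.update_of_ne i.2.ne _ _)
      rw [linearIndependent_finSucc', hinit, Fin.val_last, Function.update_self]
      exact ⟨hv'ind, fun h => hz ((mkQ_mem_span_mkQ_iff U (fun i : Fin t => v' i) z).1 h)⟩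
    · rcases eq_or_ne i t with rfl | hit
      · rw [Function.update_self]; exact hzZ
      · rw [Function.update_of_ne hit]; exact hv'Z i hi

lemma exists_linearIndependent_mkQ {U U' : Submodule K M} (hU : U ≤ U') :
    ∃ v : ℕ → M, (∀ i < finrank K U' - finrank K U, v i ∈ U') ∧
      LinearIndependent K (fun i : Fin (finrank K U' - finrank K U) => U.mkQ (v i)) := by
  obtain ⟨v, -, hvU', hvind, -⟩ := exists_extend_linearIndependent_mkQ (U := U) (U' := U')
    (v := 0) (t := finrank K U' - finrank K U) le_rfl (Nat.zero_le _)
    (by have := Submodule.finrank_mono hU; omega) (fun i hi => absurd hi (Nat.not_lt_zero i))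
    linearIndependent_empty_type le_sup_right
  exact ⟨v, hvU', hvind⟩

end QuotientIndependence

section Conjugate

lemma exists_seq_of_forall_exists_prev {α : Type*} (P : ℕ → α → α → Prop) {N : ℕ} {x₀ : α}
    (hbase : ∀ l, N ≤ l → P l x₀ x₀) (hstep : ∀ l y z, P (l + 1) y z → ∃ x, P l x y) :
    ∃ x : ℕ → α, ∀ l, P l (x l) (x (l + 1)) := by
  suffices ∀ k ≤ N, ∃ x : ℕ → α, ∀ l, k ≤ l → P l (x l) (x (l + 1)) by
    obtain ⟨x, hx⟩ := this 0 N.zero_le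
    exact ⟨x, fun l => hx l l.zero_le⟩
  intro k hk
  induction hk using Nat.decreasingInduction with
  | self => exact ⟨fun _ => x₀, hbase⟩
  | of_succ k _ ih =>
    obtain ⟨x, hx⟩ := ih
    obtain ⟨x', hx'⟩ := hstep k _ _ (hx (k + 1) le_rfl)
    refine ⟨Function.update x k x', fun l hl => ?_⟩
    rcases hl.eq_or_lt with rfl | hlt
    · rw [Function.update_self, Function.update_of_ne (by omega)]
      exact hx'
    · rw [Function.update_of_ne (by omega), Function.update_of_ne (by omega)]
      exact hx l hlt

lemma exists_conj_of_antitone {n : ℕ → ℕ} (hn : Antitone n) {N : ℕ} (hN : n N = 0) :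
    ∃ c : ℕ → ℕ, (∀ i k, i < n k ↔ k < c i) ∧ ∀ i, c i ≤ N := by
  classical
  have hex : ∀ i, ∃ k, n k ≤ i := fun i => ⟨N, by omega⟩
  refine ⟨fun i => Nat.find (hex i), fun i k => ?_, fun i => Nat.find_le (by omega)⟩
  rw [Nat.lt_find_iff]
  exact ⟨fun h j hj => not_le.2 (h.trans_le (hn hj)), fun h => not_le.1 (h k le_rfl)⟩

lemma sum_conj_eq {m N : ℕ} {n c : ℕ → ℕ} (h : ∀ i k, i < n k ↔ k < c i) (hc : ∀ i, c i ≤ N)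
    (hn : ∀ k, n k ≤ m) : ∑ i : Fin m, c i = ∑ k ∈ Finset.range N, n k := by
  rw [← Fin.sum_univ_eq_sum_range]
  calc ∑ i : Fin m, c i = ∑ i : Fin m, ∑ k : Fin N, if (k : ℕ) < c i then 1 else 0 := by
        simp [Fin.card_filter_val_lt, hc]
    _ = ∑ k : Fin N, ∑ i : Fin m, if (i : ℕ) < n k then 1 else 0 := by
        rw [Finset.sum_comm]; simp_rw [h]
    _ = ∑ k : Fin N, n k := by
        simp [Fin.card_filter_val_lt, hn]

lemma conj_eq_or_eq_succ {a b c r : ℕ → ℕ} (hc : ∀ i k, i < a k ↔ k < c i)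
    (hr : ∀ i k, i < b k ↔ k < r i) (hba : ∀ k, b k ≤ a k) (hab : ∀ k, a (k + 1) ≤ b k) (i : ℕ) :
    c i = r i ∨ c i = r i + 1 := by
  have hrc : r i ≤ c i := not_lt.1 fun h =>
    lt_irrefl (c i) ((hc i _).1 (((hr i _).2 h).trans_le (hba _)))
  have hcr : c i ≤ r i + 1 := not_lt.1 fun h =>
    lt_irrefl (r i) ((hr i _).1 (((hc i _).2 h).trans_le (hab _)))
  omega

end Conjugate

section Tower

variable {K M M' : Type*} [Field K] [AddCommGroup M] [Module K M] [AddCommGroup M'] [Module K M']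

noncomputable def finrankGap (E : ℕ → Submodule K M) (l : ℕ) : ℕ :=
  finrank K (E (l + 1)) - finrank K (E l)

lemma linearIndependent_mkQ_of_eq_comap {ι : Type*} (g : M →ₗ[K] M') {U : Submodule K M}
    {V : Submodule K M'} (hU : U = V.comap g) {y : ι → M}
    (hy : LinearIndependent K fun i => U.mkQ (y i)) :
    LinearIndependent K fun i => V.mkQ (g (y i)) := by
  subst hU
  exact hy.map' (mapQ _ V g le_rfl) (by rw [ker_mapQ, mkQ_map_self])

lemma linearIndependent_mkQ_of_map {ι : Type*} (f : M →ₗ[K] M') {U : Submodule K M} {x : ι → M}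
    (hx : LinearIndependent K fun i => (U.map f).mkQ (f (x i))) :
    LinearIndependent K fun i => U.mkQ (x i) :=
  LinearIndependent.of_comp (mapQ U (U.map f) f (le_comap_map f U)) hx

lemma exists_preimage_of_mem_map (f : M →ₗ[K] M') {E : Submodule K M} {t : ℕ} {u : ℕ → M'}
    (hu : ∀ i < t, u i ∈ E.map f) : ∃ x : ℕ → M, ∀ i < t, x i ∈ E ∧ f (x i) = u i := by
  have : ∀ i, ∃ y, i < t → y ∈ E ∧ f y = u i := fun i => by
    by_cases hi : i < t
    · obtain ⟨y, hy, hfy⟩ := mem_map.1 (hu i hi)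
      exact ⟨y, fun _ => ⟨hy, hfy⟩⟩
    · exact ⟨0, fun h => absurd h hi⟩
  choose x hx using this
  exact ⟨x, hx⟩

lemma finrankGap_eq_zero {E : ℕ → Submodule K M} {N : ℕ} (hE : ∀ k, N ≤ k → E k = E N) {l : ℕ}
    (hl : N ≤ l) : finrankGap E l = 0 := by
  rw [finrankGap, hE l hl, hE (l + 1) (by omega), Nat.sub_self]

lemma exists_basis_coe_eq {ι : Type*} [Fintype ι] {W : Submodule K M} (v : ι → M)
    (hspan : span K (range v) = W) (hcard : Fintype.card ι = finrank K W) :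
    ∃ b : Basis ι K W, ∀ i, (b i : M) = v i := by
  have hli : LinearIndependent K v :=
    linearIndependent_iff_card_eq_finrank_span.2 (by rw [Set.finrank, hspan, hcard])
  exact ⟨(Basis.span hli).map (LinearEquiv.ofEq _ _ hspan), fun i => by simp⟩

lemma le_sup_ker_inf_of_map_le (f : M →ₗ[K] M') {S E : Submodule K M} (hS : S ≤ E)
    (h : E.map f ≤ S.map f) : E ≤ S ⊔ LinearMap.ker f ⊓ E :=
  calc E ≤ (S ⊔ LinearMap.ker f) ⊓ E :=
        le_inf (by rw [← comap_map_eq]; exact map_le_iff_le_comap.1 h) le_rfl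
    _ = S ⊔ LinearMap.ker f ⊓ E := sup_inf_assoc_of_le _ hS

variable [FiniteDimensional K M] [FiniteDimensional K M']

lemma sum_range_finrankGap {E : ℕ → Submodule K M} (hE : Monotone E) (hE0 : E 0 = ⊥) (N : ℕ) :
    ∑ l ∈ Finset.range N, finrankGap E l = finrank K (E N) := by
  rw [← Nat.sub_zero (finrank K (E N)), ← finrank_bot K M, ← hE0]
  exact Finset.sum_range_tsub (f := fun l => finrank K (E l))
    (fun _ _ h => Submodule.finrank_mono (hE h)) N

lemma exists_basis_of_chains {E : ℕ → Submodule K M} (hE : Monotone E) (hE0 : E 0 = ⊥)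
    {m N : ℕ} {c : ℕ → ℕ} (hc : ∀ i k, i < finrankGap E k ↔ k < c i) (hcN : ∀ i, c i ≤ N)
    (hm : ∀ k, finrankGap E k ≤ m) (y : ℕ → ℕ → M)
    (hy : ∀ k, ∀ i < finrankGap E k, y k i ∈ E (k + 1))
    (hind : ∀ k, LinearIndependent K fun i : Fin (finrankGap E k) => (E k).mkQ (y k i)) :
    ∃ b : Basis (Σ i : Fin m, Fin (c i)) K (E N), ∀ i j, (b ⟨i, j⟩ : M) = y j i := by
  set v : (Σ i : Fin m, Fin (c i)) → M := fun q => y q.2 q.1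
  have hle : span K (range v) ≤ E N := span_le.2 <| range_subset_iff.2 fun ⟨i, j⟩ =>
    hE (by have := hcN i; omega) (hy j i ((hc i j).2 j.2))
  have hge : ∀ k, E k ≤ span K (range v) := by
    intro k
    induction k with
    | zero => simp [hE0]
    | succ k ih =>
      rw [← span_sup_eq_of_linearIndependent_mkQ (hE (by omega : k ≤ k + 1))
        (v := fun i : Fin (finrankGap E k) => y k i) (fun i => hy k i i.2) (hind k)
        (by rw [Fintype.card_fin, finrankGap]; omega)]
      exact sup_le (span_le.2 <| range_subset_iff.2 fun i =>
        subset_span ⟨⟨⟨i, i.2.trans_le (hm k)⟩, ⟨k, (hc i k).1 i.2⟩⟩, rfl⟩) ih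
  obtain ⟨b, hb⟩ := exists_basis_coe_eq v (le_antisymm hle (hge N)) <| by
    rw [Fintype.card_sigma]
    simp only [Fintype.card_fin]
    rw [sum_conj_eq hc hcN hm, sum_range_finrankGap hE hE0]
  exact ⟨b, fun i j => hb ⟨i, j⟩⟩

lemma finrank_map_sub_le (f : M →ₗ[K] M') {E₁ E₂ : Submodule K M} (hE : E₁ ≤ E₂) :
    finrank K (E₂.map f) - finrank K (E₁.map f) ≤ finrank K E₂ - finrank K E₁ := by
  obtain ⟨u, huE, huind⟩ := exists_linearIndependent_mkQ (map_mono (f := f) hE)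
  obtain ⟨x, hx⟩ := exists_preimage_of_mem_map f huE
  set b := finrank K (E₂.map f) - finrank K (E₁.map f)
  have hxind : LinearIndependent K fun i : Fin b => E₁.mkQ (x i) :=
    linearIndependent_mkQ_of_map f (by simpa only [fun i : Fin b => (hx i i.2).2] using huind)
  have := card_add_finrank_le_of_linearIndependent_mkQ hE (v := fun i : Fin b => x i)
    (fun i => (hx i i.2).1) hxind
  rw [Fintype.card_fin] at this
  omega

lemma exists_chain_step (f : M →ₗ[K] M') {E₁ E₂ : Submodule K M} (hE : E₁ ≤ E₂) {s : ℕ}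
    {w : ℕ → M'} (hw : ∀ i < s, w i ∈ E₂.map f)
    (hwind : LinearIndependent K fun i : Fin s => (E₁.map f).mkQ (w i)) :
    ∃ x : ℕ → M, (∀ i < finrank K E₂ - finrank K E₁, x i ∈ E₂) ∧
      (LinearIndependent K fun i : Fin (finrank K E₂ - finrank K E₁) => E₁.mkQ (x i)) ∧
      (∀ i < s, f (x i) = w i) ∧
      (∀ i, finrank K (E₂.map f) - finrank K (E₁.map f) ≤ i → f (x i) = 0) ∧
      LinearIndependent K fun i : Fin (finrank K (E₂.map f) - finrank K (E₁.map f)) =>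
        (E₁.map f).mkQ (f (x i)) := by
  set b := finrank K (E₂.map f) - finrank K (E₁.map f)
  have hF : E₁.map f ≤ E₂.map f := map_mono hE
  have hsb := card_add_finrank_le_of_linearIndependent_mkQ hF (v := fun i : Fin s => w i)
    (fun i => hw i i.2) hwind
  have hba : b ≤ finrank K E₂ - finrank K E₁ := finrank_map_sub_le f hE
  have hF₁₂ := Submodule.finrank_mono hF
  have hE₁₂ := Submodule.finrank_mono hE
  rw [Fintype.card_fin] at hsb
  obtain ⟨u, huw, huF, huind, -⟩ := exists_extend_linearIndependent_mkQ (Z := E₂.map f) le_rfl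
    (t := b) (by omega) (by omega) hw hwind le_sup_right
  obtain ⟨x₀, hx₀⟩ := exists_preimage_of_mem_map f huF
  have hfx₀ : ∀ i : Fin b, f (x₀ i) = u i := fun i => (hx₀ i i.2).2
  have hx₀ind : LinearIndependent K fun i : Fin b => E₁.mkQ (x₀ i) :=
    linearIndependent_mkQ_of_map f (by simpa only [hfx₀] using huind)
  have hspan : E₂ ≤ span K (range fun i : Fin b => x₀ i) ⊔ E₁ ⊔ LinearMap.ker f ⊓ E₂ := by
    refine le_sup_ker_inf_of_map_le f (sup_le (span_le.2 (range_subset_iff.2 fun i : Fin b =>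
      (hx₀ i i.2).1)) hE) ?_
    have hfS : (f ∘ fun i : Fin b => x₀ i) = fun i : Fin b => u i := funext hfx₀
    rw [Submodule.map_sup, map_span, ← range_comp, hfS, span_sup_eq_of_linearIndependent_mkQ hF
      (v := fun i : Fin b => u i) (fun i => huF i i.2) huind (by rw [Fintype.card_fin]; omega)]
  obtain ⟨x, hxx₀, hxE, hxind, hxker⟩ := exists_extend_linearIndependent_mkQ inf_le_right hba
    (by omega) (fun i hi => (hx₀ i hi).1) hx₀ind hspan
  have hfx : ∀ i : Fin b, f (x i) = u i := fun i => by rw [hxx₀ i i.2, hfx₀ i]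
  refine ⟨x, hxE, hxind, fun i hi => ?_, fun i hi => (hxker i hi).1,
    by simpa only [hfx] using huind⟩
  rw [hxx₀ i (by omega), (hx₀ i (by omega)).2, huw i hi]

end Tower

section KroneckerTower

variable {K M M' : Type*} [Field K] [AddCommGroup M] [Module K M] [AddCommGroup M'] [Module K M']
  {f g : M →ₗ[K] M'} {E : ℕ → Submodule K M}

lemma tower_monotone (hE0 : E 0 = ⊥) (hE : ∀ k, E (k + 1) = ((E k).map f).comap g) :
    Monotone E := by
  refine monotone_nat_of_le_succ fun k => ?_
  induction k with
  | zero => simp [hE0]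
  | succ k ih =>
    rw [hE k, hE (k + 1)]
    exact comap_mono (map_mono ih)

lemma tower_eq_of_le (hE : ∀ k, E (k + 1) = ((E k).map f).comap g) {N : ℕ}
    (hN : E (N + 1) = E N) {l : ℕ} (hl : N ≤ l) : E l = E N := by
  induction l, hl using Nat.le_induction with
  | base => rfl
  | succ l _ ih => rw [hE l, ih, ← hE N, hN]

/-- `x i`, for `i < finrankGap E l`, is the vector at height `l` of the `i`-th chain; the chains
are linked by `f (x i) = g (y i)`, where `y` is the next level. -/
structure IsChainLevel (f g : M →ₗ[K] M') (E : ℕ → Submodule K M) (l : ℕ) (x y : ℕ → M) :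
    Prop where
  mem : ∀ i < finrankGap E l, x i ∈ E (l + 1)
  linearIndependent : LinearIndependent K fun i : Fin (finrankGap E l) => (E l).mkQ (x i)
  map_eq : ∀ i < finrankGap E (l + 1), f (x i) = g (y i)
  map_eq_zero : ∀ i, finrankGap (fun k => (E k).map f) l ≤ i → f (x i) = 0
  linearIndependent_map : LinearIndependent K
    fun i : Fin (finrankGap (fun k => (E k).map f) l) => ((E l).map f).mkQ (f (x i))

lemma isChainLevel_zero (hE : ∀ k, E (k + 1) = ((E k).map f).comap g) {N : ℕ}
    (hN : E (N + 1) = E N) {l : ℕ} (hl : N ≤ l) : IsChainLevel f g E l 0 0 := by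
  have hE' : ∀ k, N ≤ k → E k = E N := fun k hk => tower_eq_of_le hE hN hk
  have ha := finrankGap_eq_zero hE' hl
  have ha' := finrankGap_eq_zero hE' (l := l + 1) (by omega)
  have hb := finrankGap_eq_zero (E := fun k => (E k).map f) (fun k hk => by rw [hE' k hk]) hl
  have : IsEmpty (Fin (finrankGap E l)) := by rw [ha]; infer_instance
  have : IsEmpty (Fin (finrankGap (fun k => (E k).map f) l)) := by rw [hb]; infer_instance
  exact ⟨fun i hi => by omega, linearIndependent_empty_type, fun i hi => by omega,
    fun i _ => map_zero f, linearIndependent_empty_type⟩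

variable [FiniteDimensional K M] [FiniteDimensional K M']

lemma finrankGap_succ_le (hE0 : E 0 = ⊥) (hE : ∀ k, E (k + 1) = ((E k).map f).comap g) (l : ℕ) :
    finrankGap E (l + 1) ≤ finrankGap (fun k => (E k).map f) l := by
  have hmono := tower_monotone hE0 hE
  obtain ⟨y, hyE, hyind⟩ := exists_linearIndependent_mkQ (hmono (by omega : l + 1 ≤ l + 2))
  have hgy : ∀ i < finrankGap E (l + 1), g (y i) ∈ (E (l + 1)).map f := fun i hi => by
    simpa only [hE (l + 1), mem_comap] using hyE i hi
  have := card_add_finrank_le_of_linearIndependent_mkQ (map_mono (hmono (by omega : l ≤ l + 1)))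
    (v := fun i : Fin (finrankGap E (l + 1)) => g (y i)) (fun i => hgy i i.2)
    (linearIndependent_mkQ_of_eq_comap g (hE l) hyind)
  rw [Fintype.card_fin] at this
  simp only [finrankGap] at this ⊢
  omega

lemma IsChainLevel.exists_prev (hE0 : E 0 = ⊥) (hE : ∀ k, E (k + 1) = ((E k).map f).comap g)
    {l : ℕ} {y z : ℕ → M} (h : IsChainLevel f g E (l + 1) y z) :
    ∃ x, IsChainLevel f g E l x y := by
  have hgy : ∀ i < finrankGap E (l + 1), g (y i) ∈ (E (l + 1)).map f := fun i hi => by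
    simpa only [hE (l + 1), mem_comap] using h.mem i hi
  obtain ⟨x, hxE, hxind, hxy, hxker, hxind'⟩ :=
    exists_chain_step f (tower_monotone hE0 hE l.le_succ) hgy
      (linearIndependent_mkQ_of_eq_comap g (hE l) h.linearIndependent)
  exact ⟨x, ⟨hxE, hxind, hxy, hxker, hxind'⟩⟩

lemma exists_isChainLevel (hE0 : E 0 = ⊥) (hE : ∀ k, E (k + 1) = ((E k).map f).comap g) {N : ℕ}
    (hN : E (N + 1) = E N) : ∃ x : ℕ → ℕ → M, ∀ l, IsChainLevel f g E l (x l) (x (l + 1)) :=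
  exists_seq_of_forall_exists_prev _ (fun _ hl => isChainLevel_zero hE hN hl)
    (fun _ _ _ h => h.exists_prev hE0 hE)

theorem exists_chain_bases (hE0 : E 0 = ⊥) (hE : ∀ k, E (k + 1) = ((E k).map f).comap g)
    {N : ℕ} (hN : E (N + 1) = E N) :
    ∃ (m : ℕ) (r c : Fin m → ℕ) (bE : Basis (Σ i, Fin (c i)) K (E N))
      (bF : Basis (Σ i, Fin (r i)) K ((E N).map f)),
      (∀ i, c i = r i ∨ c i = r i + 1) ∧
      (∀ i (j : Fin (c i)) (a : Fin (r i)), (j : ℕ) = a → f (bE ⟨i, j⟩) = bF ⟨i, a⟩) ∧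
      (∀ i (j : Fin (c i)), r i ≤ j → f (bE ⟨i, j⟩) = 0) ∧
      (∀ i (j : Fin (c i)) (a : Fin (r i)), (j : ℕ) = a + 1 → g (bE ⟨i, j⟩) = bF ⟨i, a⟩) ∧
      (∀ i (j : Fin (c i)), (j : ℕ) = 0 → g (bE ⟨i, j⟩) = 0) := by
  obtain ⟨x, hx⟩ := exists_isChainLevel hE0 hE hN
  have hmono := tower_monotone hE0 hE
  set a := finrankGap E
  set b := finrankGap fun k => (E k).map f
  have hab : ∀ k, a (k + 1) ≤ b k := finrankGap_succ_le hE0 hE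
  have hba : ∀ k, b k ≤ a k := fun k => finrank_map_sub_le f (hmono (by omega : k ≤ k + 1))
  have ha : Antitone a := antitone_nat_of_succ_le fun k => (hab k).trans (hba k)
  have hb : Antitone b := antitone_nat_of_succ_le fun k => (hba (k + 1)).trans (hab k)
  have hstab : ∀ k, N ≤ k → E k = E N := fun k hk => tower_eq_of_le hE hN hk
  obtain ⟨c, hc, hcN⟩ := exists_conj_of_antitone ha (finrankGap_eq_zero hstab le_rfl)
  obtain ⟨r, hr, hrN⟩ := exists_conj_of_antitone hb
    (finrankGap_eq_zero (E := fun k => (E k).map f) (fun k hk => by rw [hstab k hk]) le_rfl)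
  obtain ⟨bE, hbE⟩ := exists_basis_of_chains hmono hE0 (m := a 0) hc hcN
    (fun k => ha k.zero_le) x (fun k => (hx k).mem) (fun k => (hx k).linearIndependent)
  obtain ⟨bF, hbF⟩ := exists_basis_of_chains (fun _ _ h => map_mono (hmono h))
    (by rw [hE0, Submodule.map_bot]) (m := a 0) hr hrN (fun k => (hba k).trans (ha k.zero_le))
    (fun k i => f (x k i)) (fun k i hi => mem_map_of_mem ((hx k).mem i (hi.trans_le (hba k))))
    (fun k => (hx k).linearIndependent_map)
  refine ⟨a 0, fun i => r i, fun i => c i, bE, bF, fun i => conj_eq_or_eq_succ hc hr hba hab i,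
    ?_, ?_, ?_, ?_⟩
  · intro i j k hjk
    rw [hbE, hbF, hjk]
  · intro i j hj
    rw [hbE]
    exact (hx j).map_eq_zero i (not_lt.1 fun h => (not_lt.2 hj) ((hr i j).1 h))
  · intro i j k hjk
    rw [hbE, hbF, (hx k).map_eq i ((hc i _).2 (hjk ▸ j.2)), hjk]
  · intro i j hj
    have hx0 := (hx 0).mem i i.2
    rw [hE 0, hE0, Submodule.map_bot, mem_comap, mem_bot] at hx0
    rw [hbE, hj, hx0]

end KroneckerTower

section Pencil

open Polynomial Matrix

-- `J_r(1, X)` when `c = r`, and `L_r + X K_r` when `c = r + 1`.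
noncomputable def kroneckerBlock (R : Type*) [Semiring R] (r c : ℕ) : Matrix (Fin r) (Fin c) R[X] :=
  fun a b => if (b : ℕ) = a then 1 else if (b : ℕ) = a + 1 then X else 0

variable {R V W : Type*} [CommSemiring R] [AddCommMonoid V] [Module R V] [AddCommMonoid W]
  [Module R W]

lemma toMatrix_eq_blockDiagonal' {o : Type*} [Fintype o] [DecidableEq o] {ρ γ : o → Type*}
    [∀ i, Fintype (ρ i)] [∀ i, Fintype (γ i)] [∀ i, DecidableEq (γ i)]
    (bV : Basis (Σ i, γ i) R V) (bW : Basis (Σ i, ρ i) R W) (φ : V →ₗ[R] W)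
    (D : ∀ i, Matrix (ρ i) (γ i) R) (h : ∀ i j, φ (bV ⟨i, j⟩) = ∑ a, D i a j • bW ⟨i, a⟩) :
    LinearMap.toMatrix bV bW φ = blockDiagonal' D := by
  suffices φ = toLin bV bW (blockDiagonal' D) by rw [this, LinearMap.toMatrix_toLin]
  refine bV.ext fun ⟨i, j⟩ => ?_
  rw [toLin_self, h, Fintype.sum_sigma, Finset.sum_eq_single i]
  · simp [blockDiagonal'_apply_eq]
  · intro i' _ hi'
    simp [blockDiagonal'_apply_ne _ _ _ hi']
  · simp

lemma sum_ite_val_smul_eq {r : ℕ} (k : ℕ) (v : Fin r → W) {w : W}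
    (hv : ∀ a : Fin r, (a : ℕ) = k → v a = w) (hw : r ≤ k → w = 0) :
    ∑ a : Fin r, (if k = a then (1 : R) else 0) • v a = w := by
  by_cases hk : k < r
  · rw [Finset.sum_eq_single ⟨k, hk⟩ (fun a _ ha => by
      rw [if_neg fun h => ha (Fin.ext h.symm), zero_smul]) (by simp)]
    simp [hv ⟨k, hk⟩ rfl]
  · rw [hw (not_lt.1 hk)]
    exact Finset.sum_eq_zero fun a _ => by rw [if_neg (by omega), zero_smul]

lemma pencil_toMatrix_eq_blockDiagonal' {m : ℕ} {r c : Fin m → ℕ} (hrc : ∀ i, c i ≤ r i + 1)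
    (bV : Basis (Σ i, Fin (c i)) R V) (bW : Basis (Σ i, Fin (r i)) R W) (φ ψ : V →ₗ[R] W)
    (hφ : ∀ i (j : Fin (c i)) (a : Fin (r i)), (j : ℕ) = a → φ (bV ⟨i, j⟩) = bW ⟨i, a⟩)
    (hφ0 : ∀ i (j : Fin (c i)), r i ≤ j → φ (bV ⟨i, j⟩) = 0)
    (hψ : ∀ i (j : Fin (c i)) (a : Fin (r i)), (j : ℕ) = a + 1 → ψ (bV ⟨i, j⟩) = bW ⟨i, a⟩)
    (hψ0 : ∀ i (j : Fin (c i)), (j : ℕ) = 0 → ψ (bV ⟨i, j⟩) = 0) :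
    (LinearMap.toMatrix bV bW φ).map C + (X : R[X]) • (LinearMap.toMatrix bV bW ψ).map C =
      blockDiagonal' fun i => kroneckerBlock R (r i) (c i) := by
  rw [toMatrix_eq_blockDiagonal' bV bW φ (fun _ => of fun a j => if (j : ℕ) = a then 1 else 0)
      fun i j => (sum_ite_val_smul_eq j _ (fun a ha => (hφ i j a ha.symm).symm) (hφ0 i j)).symm,
    toMatrix_eq_blockDiagonal' bV bW ψ (fun _ => of fun a j => if (j : ℕ) = a + 1 then 1 else 0) ?_,
    blockDiagonal'_map _ _ (map_zero C), blockDiagonal'_map _ _ (map_zero C),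
    ← blockDiagonal'_smul, ← blockDiagonal'_add]
  · congr 1
    ext i a j
    simp only [Pi.add_apply, Pi.smul_apply, Matrix.add_apply, Matrix.smul_apply, Matrix.map_apply,
      of_apply, kroneckerBlock]
    split_ifs <;> simp_all
  · rintro i ⟨_ | k, hk⟩
    · simp [hψ0]
    · simp only [of_apply, Nat.add_right_cancel_iff]
      exact (sum_ite_val_smul_eq k _ (fun a ha => (hψ i _ a (by simp [ha])).symm)
        (fun h => absurd (hrc i) (by omega))).symm

end Pencil

open Polynomial in
theorem exists_basis_pencil_eq_blockDiagonal' {K M M' : Type*} [Field K] [AddCommGroup M]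
    [Module K M] [AddCommGroup M'] [Module K M'] [FiniteDimensional K M] [FiniteDimensional K M']
    {f g : M →ₗ[K] M'} {E : ℕ → Submodule K M} (hE0 : E 0 = ⊥)
    (hE : ∀ k, E (k + 1) = ((E k).map f).comap g) {N : ℕ} (hN : E (N + 1) = E N)
    {F : Submodule K M'} (hF : (E N).map f = F) (f' g' : E N →ₗ[K] F)
    (hf' : ∀ x, (f' x : M') = f x) (hg' : ∀ x, (g' x : M') = g x) :
    ∃ (m : ℕ) (r c : Fin m → ℕ) (bE : Basis (Σ i, Fin (c i)) K (E N))
      (bF : Basis (Σ i, Fin (r i)) K F),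
      (∀ i, c i = r i ∨ c i = r i + 1) ∧
      (LinearMap.toMatrix bE bF f').map C + (X : K[X]) • (LinearMap.toMatrix bE bF g').map C =
        Matrix.blockDiagonal' fun i => kroneckerBlock K (r i) (c i) := by
  subst hF
  obtain ⟨m, r, c, bE, bF, hrc, hf, hf0, hg, hg0⟩ := exists_chain_bases hE0 hE hN
  refine ⟨m, r, c, bE, bF, hrc, pencil_toMatrix_eq_blockDiagonal'
    (fun i => by rcases hrc i with h | h <;> omega) bE bF f' g'
    (fun i j a h => Subtype.ext ?_) (fun i j h => Subtype.ext ?_)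
    (fun i j a h => Subtype.ext ?_) (fun i j h => Subtype.ext ?_)⟩
  · rw [hf', hf i j a h]
  · rw [hf', hf0 i j h, ZeroMemClass.coe_zero]
  · rw [hg', hg i j a h]
  · rw [hg', hg0 i j h, ZeroMemClass.coe_zero]

theorem stmt_13_general {K : Type*} [Field K] {n p : ℕ}
    (A B : Matrix (Fin n) (Fin p) K)
    (Es : ℕ → Submodule K (Fin p → K)) (Fs : ℕ → Submodule K (Fin n → K))
    (hE0 : Es 0 = ⊥) (hF0 : Fs 0 = ⊥)
    (hE : ∀ k, Es (k + 1) = (Fs k).comap B.mulVecLin)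
    (hF : ∀ k, Fs (k + 1) = (Es (k + 1)).map A.mulVecLin)
    (N : ℕ) (hN : Es (N + 1) = Es N)
    (f g : Es N →ₗ[K] Fs N)
    (hf : ∀ x : Es N, (f x : Fin n → K) = A.mulVec (x : Fin p → K))
    (hg : ∀ x : Es N, (g x : Fin n → K) = B.mulVec (x : Fin p → K)) :
    ∃ (m : ℕ) (r c : Fin m → ℕ)
      (bE : Module.Basis (Σ i, Fin (c i)) K (Es N)) (bF : Module.Basis (Σ i, Fin (r i)) K (Fs N))
      (blk : ∀ i, Matrix (Fin (r i)) (Fin (c i)) (Polynomial K)),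
      (∀ i, (c i = r i ∨ c i = r i + 1) ∧
        ∀ (a : Fin (r i)) (b : Fin (c i)),
          blk i a b = if (b : ℕ) = (a : ℕ) then 1
            else if (b : ℕ) = (a : ℕ) + 1 then Polynomial.X else 0) ∧
      (LinearMap.toMatrix bE bF f).map Polynomial.C
          + (Polynomial.X : Polynomial K) • (LinearMap.toMatrix bE bF g).map Polynomial.C
        = Matrix.blockDiagonal' blk := by
  have hFs : ∀ k, Fs k = (Es k).map A.mulVecLin
    | 0 => by rw [hF0, hE0, Submodule.map_bot]
    | k + 1 => hF k
  obtain ⟨m, r, c, bE, bF, hrc, hpencil⟩ := exists_basis_pencil_eq_blockDiagonal' hE0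
    (fun k => by rw [hE, hFs]) hN (hFs N).symm f g hf hg
  exact ⟨m, r, c, bE, bF, fun i => kroneckerBlock K (r i) (c i), fun i => ⟨hrc i, fun _ _ => rfl⟩,
    hpencil⟩

/-- On the stable spaces `E_N`, `F_N` of the Kronecker towers, the pencil `f + X g` of
the induced maps can be written, in suitable bases, as a block-diagonal matrix whose
blocks are of the form `J_r(1,X)` (square, 1 on the diagonal, X on the superdiagonal)
or `L_s + X K_s` (size `s × (s+1)`, 1 on the diagonal, X on the superdiagonal). -/
theorem stmt_13 {K : Type*} [Field K] {n p : ℕ}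
    (A B : Matrix (Fin n) (Fin p) K)
    (hker : LinearMap.ker A.mulVecLin ⊓ LinearMap.ker B.mulVecLin = ⊥)
    (Es : ℕ → Submodule K (Fin p → K)) (Fs : ℕ → Submodule K (Fin n → K))
    (hE0 : Es 0 = ⊥) (hF0 : Fs 0 = ⊥)
    (hE : ∀ k, Es (k + 1) = (Fs k).comap B.mulVecLin)
    (hF : ∀ k, Fs (k + 1) = (Es (k + 1)).map A.mulVecLin)
    (N : ℕ) (hN : Es (N + 1) = Es N)
    (f g : Es N →ₗ[K] Fs N)
    (hf : ∀ x : Es N, (f x : Fin n → K) = A.mulVec (x : Fin p → K))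
    (hg : ∀ x : Es N, (g x : Fin n → K) = B.mulVec (x : Fin p → K)) :
    ∃ (m : ℕ) (r c : Fin m → ℕ)
      (bE : Module.Basis (Σ i, Fin (c i)) K (Es N)) (bF : Module.Basis (Σ i, Fin (r i)) K (Fs N))
      (blk : ∀ i, Matrix (Fin (r i)) (Fin (c i)) (Polynomial K)),
      (∀ i, (c i = r i ∨ c i = r i + 1) ∧
        ∀ (a : Fin (r i)) (b : Fin (c i)),
          blk i a b = if (b : ℕ) = (a : ℕ) then 1
            else if (b : ℕ) = (a : ℕ) + 1 then Polynomial.X else 0) ∧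
      (LinearMap.toMatrix bE bF f).map Polynomial.C
          + (Polynomial.X : Polynomial K) • (LinearMap.toMatrix bE bF g).map Polynomial.C
        = Matrix.blockDiagonal' blk :=
  stmt_13_general A B Es Fs hE0 hF0 hE hF N hN f g hf hg
end

section
/- Simultaneous similarity implies simultaneous equality in the separable quadratic case: let L/K be a separable quadratic extension and (A_i), (B_i) families in M_n(K). If there exists P ∈ GL_n(L), with P = Q + εR where (Q,R) is in the block form Q = diag(M, I_{n-q}), R = diag(I_q, N) with M invertible and N nilpotent, such that P A_i P^{-1} = B_i for all i, then A_i = B_i for all i. -/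
lemma sandwich_pow {K : Type*} [CommRing K] {p r : Type*} [Fintype p] [Fintype r] [DecidableEq p] [DecidableEq r]
    {M : Matrix p p K} {N : Matrix r r K} {X : Matrix p r K} (hX : X = M * X * N) :
    ∀ k, X = M ^ k * X * N ^ k := by
  intro k
  induction k with
  | zero => simp
  | succ k ih =>
      calc X = M * X * N := hX
        _ = M * (M ^ k * X * N ^ k) * N := by rw [← ih]
        _ = M ^ (k + 1) * X * N ^ (k + 1) := by
            rw [pow_succ' M k, pow_succ N k]
            simp only [Matrix.mul_assoc]

lemma blocks_aux {K : Type*} [CommRing K] {p r : Type*} [Fintype p] [Fintype r]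
    [DecidableEq p] [DecidableEq r]
    {M : Matrix p p K} {N : Matrix r r K} (hN : IsNilpotent N)
    {A B : Matrix (p ⊕ r) (p ⊕ r) K}
    (h1 : Matrix.fromBlocks M 0 0 1 * A = B * Matrix.fromBlocks M 0 0 1)
    (h2 : Matrix.fromBlocks 1 0 0 N * A = B * Matrix.fromBlocks 1 0 0 N) :
    A = B := by
  obtain ⟨k, hk⟩ := hN
  rw [← Matrix.fromBlocks_toBlocks A, ← Matrix.fromBlocks_toBlocks B,
    Matrix.fromBlocks_multiply, Matrix.fromBlocks_multiply] at h1 h2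
  set a11 := A.toBlocks₁₁; set a12 := A.toBlocks₁₂
  set a21 := A.toBlocks₂₁; set a22 := A.toBlocks₂₂
  set b11 := B.toBlocks₁₁; set b12 := B.toBlocks₁₂
  set b21 := B.toBlocks₂₁; set b22 := B.toBlocks₂₂
  have e12Q : M * a12 = b12 := by
    have := congrArg Matrix.toBlocks₁₂ h1
    simpa using this
  have e21Q : a21 = b21 * M := by
    have := congrArg Matrix.toBlocks₂₁ h1
    simpa using this
  have e22Q : a22 = b22 := by
    have := congrArg Matrix.toBlocks₂₂ h1
    simpa using this
  have e11R : a11 = b11 := by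
    have := congrArg Matrix.toBlocks₁₁ h2
    simpa using this
  have e12R : a12 = b12 * N := by
    have := congrArg Matrix.toBlocks₁₂ h2
    simpa using this
  have e21R : N * a21 = b21 := by
    have := congrArg Matrix.toBlocks₂₁ h2
    simpa using this
  have ha12 : a12 = 0 := by
    have hs : a12 = M * a12 * N := by rw [e12Q, ← e12R]
    have := sandwich_pow hs k
    rw [hk, Matrix.mul_zero] at this
    exact this
  have ha21 : a21 = 0 := by
    have hs : a21 = N * a21 * M := by rw [e21R, ← e21Q]
    have := sandwich_pow hs k
    rw [hk, Matrix.zero_mul, Matrix.zero_mul] at this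
    exact this
  have hb12 : b12 = 0 := by rw [← e12Q, ha12, Matrix.mul_zero]
  have hb21 : b21 = 0 := by rw [← e21R, ha21, Matrix.mul_zero]
  rw [← Matrix.fromBlocks_toBlocks A, ← Matrix.fromBlocks_toBlocks B]
  show Matrix.fromBlocks a11 a12 a21 a22 = Matrix.fromBlocks b11 b12 b21 b22
  rw [e11R, ha12, ha21, e22Q, hb12, hb21]

/-- In the separable quadratic case, if the conjugating matrix has the canonical
Kronecker block form `P = diag(M + ε I, I + ε N)` with `M` invertible and `N` nilpotent,
then simultaneous similarity via `P` forces the two families to be equal. -/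
theorem stmt_19 {K L : Type*} [Field K] [Field L] [Algebra K L]
    [Algebra.IsSeparable K L] (hrank : Module.finrank K L = 2)
    (ε : L) (hε : ε ∉ (algebraMap K L).range)
    {n q : ℕ} (hq : q ≤ n) {I : Type*}
    (A B : I → Matrix (Fin q ⊕ Fin (n - q)) (Fin q ⊕ Fin (n - q)) K)
    (M : Matrix (Fin q) (Fin q) K) (hM : IsUnit M)
    (N : Matrix (Fin (n - q)) (Fin (n - q)) K) (hN : IsNilpotent N)
    (P : Matrix (Fin q ⊕ Fin (n - q)) (Fin q ⊕ Fin (n - q)) L)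
    (hP : P = Matrix.fromBlocks (M.map (algebraMap K L) + ε • 1) 0 0
      (1 + ε • N.map (algebraMap K L)))
    (hPu : IsUnit P)
    (h : ∀ i, P * (A i).map (algebraMap K L) * P⁻¹ = (B i).map (algebraMap K L)) :
    ∀ i, A i = B i := by
  intro i
  set f := algebraMap K L with hf
  have finj : Function.Injective f := (algebraMap K L).injective
  have hsep : ∀ x y x' y' : K, f x + ε * f y = f x' + ε * f y' → x = x' ∧ y = y' := by
    intro x y x' y' hxy
    have hy : y = y' := by
      by_contra hne
      apply hε
      refine ⟨(x' - x) / (y - y'), ?_⟩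
      have hd : (y - y') ≠ 0 := sub_ne_zero.mpr hne
      have hd' : f (y - y') ≠ 0 := fun hc => hd (finj (by simpa using hc))
      rw [show ((algebraMap K L) ((x' - x) / (y - y')) : L) = f ((x' - x) / (y - y')) from rfl,
        map_div₀, div_eq_iff hd', map_sub, map_sub]
      linear_combination -hxy
    subst hy
    have hx : f x = f x' := by
      have := hxy
      exact add_right_cancel hxy
    exact ⟨finj hx, rfl⟩
  have hmat : ∀ X Y X' Y' : Matrix (Fin q ⊕ Fin (n - q)) (Fin q ⊕ Fin (n - q)) K,
      X.map f + ε • Y.map f = X'.map f + ε • Y'.map f → X = X' ∧ Y = Y' := by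
    intro X Y X' Y' hXY
    have hent : ∀ a b, X a b = X' a b ∧ Y a b = Y' a b := by
      intro a b
      have hab := congrFun (congrFun hXY a) b
      simp only [Matrix.add_apply, Matrix.smul_apply, Matrix.map_apply, smul_eq_mul] at hab
      exact hsep _ _ _ _ hab
    exact ⟨Matrix.ext fun a b => (hent a b).1, Matrix.ext fun a b => (hent a b).2⟩
  have hdet : IsUnit P.det := (Matrix.isUnit_iff_isUnit_det P).mp hPu
  have key : P * (A i).map f = (B i).map f * P := by
    calc P * (A i).map f = P * (A i).map f * P⁻¹ * P := by
          rw [Matrix.mul_assoc (P * (A i).map f), Matrix.nonsing_inv_mul P hdet, Matrix.mul_one]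
      _ = (B i).map f * P := by rw [h i]
  have hPQR : P = (Matrix.fromBlocks M 0 0 1 : Matrix _ _ K).map f
      + ε • (Matrix.fromBlocks 1 0 0 N : Matrix _ _ K).map f := by
    rw [hP]
    ext (a | a) (b | b) <;>
      simp [Matrix.map_apply, Matrix.one_apply, Matrix.smul_apply, smul_eq_mul,
        mul_ite, mul_one, mul_zero, map_one, map_zero]
  rw [hPQR, Matrix.add_mul, Matrix.mul_add, Matrix.smul_mul, Matrix.mul_smul,
    ← Matrix.map_mul, ← Matrix.map_mul, ← Matrix.map_mul, ← Matrix.map_mul] at key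
  obtain ⟨h1, h2⟩ := hmat _ _ _ _ key
  exact blocks_aux hN h1 h2
end
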